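/- arXiv:1309.1147 — 7 statements merged into one kernel-verified Lean document; each statement's English description precedes it below -/
import Mathlib

section
/- Let S = (a_1,…,a_n) be a k-sequence whose greedy partition has m ≥ 2 blocks. Then there is a subsequence S* of S (with the inherited sign function) such that the greedy partition of S* also has m blocks, every block of the greedy partition of S* contains at most k+3 elements, the last block of the greedy partition of S* has exactly 2 elements, and every string of 2k+5 consecutive elements of S* contains both a positive (k+1)-element subset and a negative one. -/
open Set

/-- `h` is an (affine) hyperplane in `ℝ^d`: the solution set of a nontrivial
linear equation `∑ i, u i * x i = c`. -/
def IsHyperplane {d : ℕ} (h : Set (Fin d → ℝ)) : Prop :=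
  ∃ (u : Fin d → ℝ) (c : ℝ), u ≠ 0 ∧ h = {x | ∑ i, u i * x i = c}

/-- A curve `γ` is `k`-crossing on the interval `I` if for every hyperplane `h`
the set `{t ∈ I : γ t ∈ h}` has at most `k` elements. -/
def CurveCrossing {d : ℕ} (k : ℕ) (I : Set ℝ) (γ : ℝ → (Fin d → ℝ)) : Prop :=
  ∀ h : Set (Fin d → ℝ), IsHyperplane h → {t | t ∈ I ∧ γ t ∈ h}.encard ≤ (k : ℕ∞)

/-- The polygonal path `p 0 p 1 ⋯ p (n-1)`, as a subset of `ℝ^d`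
(the union of its edges). -/
def PathSet {d n : ℕ} (p : Fin n → (Fin d → ℝ)) : Set (Fin d → ℝ) :=
  ⋃ (i : Fin n) (h : (i : ℕ) + 1 < n), segment ℝ (p i) (p ⟨(i : ℕ) + 1, h⟩)

/-- A polygonal path is `k`-crossing if every hyperplane containing no edge of the
path intersects the path in at most `k` points. -/
def PathCrossing {d n : ℕ} (k : ℕ) (p : Fin n → (Fin d → ℝ)) : Prop :=
  ∀ h : Set (Fin d → ℝ), IsHyperplane h →
    (∀ (i : Fin n) (hi : (i : ℕ) + 1 < n), ¬ segment ℝ (p i) (p ⟨(i : ℕ) + 1, hi⟩) ⊆ h) →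
    (PathSet p ∩ h).encard ≤ (k : ℕ∞)

/-- A point sequence in `ℝ^d` is in general position if every at most `d+1` of the
points are affinely independent. -/
def GeneralPosition {d n : ℕ} (p : Fin n → (Fin d → ℝ)) : Prop :=
  ∀ s : Finset (Fin n), s.card ≤ d + 1 → AffineIndependent ℝ (fun i : s => p i)

/-- The sign (orientation) of an ordered `(d+1)`-tuple of points of `ℝ^d`: the sign of
the determinant of the `(d+1) × (d+1)` matrix whose `j`-th column is `(1, q j)`. -/
noncomputable def otSign {d : ℕ} (q : Fin (d + 1) → (Fin d → ℝ)) : ℝ :=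
  Real.sign (Matrix.det (Matrix.of fun i j : Fin (d + 1) =>
    (Fin.cons (1 : ℝ) (q j) : Fin (d + 1) → ℝ) i))

/-- A point sequence is order-type homogeneous if all of its increasing-index
`(d+1)`-tuples have the same nonzero sign. -/
def OrderTypeHomogeneous {d n : ℕ} (p : Fin n → (Fin d → ℝ)) : Prop :=
  ∃ σ : ℝ, σ ≠ 0 ∧ ∀ f : Fin (d + 1) → Fin n, StrictMono f →
    otSign (fun j => p (f j)) = σ

/-- The sign of a `(d+1)`-element subset of the index set of a point sequence:
the sign of the corresponding increasing-index `(d+1)`-tuple (junk value `0` if the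
set does not have `d+1` elements). -/
noncomputable def finsetSign {d n : ℕ} (p : Fin n → (Fin d → ℝ)) (s : Finset (Fin n)) : ℝ :=
  if h : s.card = d + 1 then otSign (fun j => p ((s.orderIsoOfFin h) j : Fin n)) else 0

/-- A point sequence in `ℝ^d` is in super-general position if for each `1 ≤ k ≤ d` its
projection to the first `k` coordinates is in general position. -/
def SuperGeneralPosition {d n : ℕ} (p : Fin n → (Fin d → ℝ)) : Prop :=
  ∀ (k : ℕ), 1 ≤ k → ∀ (hk : k ≤ d),
    GeneralPosition (fun i => fun j : Fin k => p i (Fin.castLE hk j))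

/-- A point sequence in `ℝ^d` is super-order-type homogeneous if for each `1 ≤ k ≤ d` its
projection to the first `k` coordinates is order-type homogeneous. -/
def SuperOrderTypeHomogeneous {d n : ℕ} (p : Fin n → (Fin d → ℝ)) : Prop :=
  ∀ (k : ℕ), 1 ≤ k → ∀ (hk : k ≤ d),
    OrderTypeHomogeneous (fun i => fun j : Fin k => p i (Fin.castLE hk j))

/-- `OTNum d n` is the smallest `N` such that every sequence of `N` points in general
position in `ℝ^d` contains an order-type homogeneous subsequence of length `n`. -/
noncomputable def OTNum (d n : ℕ) : ℕ :=
  sInf {N : ℕ | ∀ p : Fin N → (Fin d → ℝ), GeneralPosition p →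
    ∃ f : Fin n → Fin N, StrictMono f ∧ OrderTypeHomogeneous (fun i => p (f i))}

/-- `COTNum d n` is the smallest `N` such that every sequence of `N` points in
super-general position in `ℝ^d` contains a super-order-type homogeneous subsequence
of length `n`. -/
noncomputable def COTNum (d n : ℕ) : ℕ :=
  sInf {N : ℕ | ∀ p : Fin N → (Fin d → ℝ), SuperGeneralPosition p →
    ∃ f : Fin n → Fin N, StrictMono f ∧ SuperOrderTypeHomogeneous (fun i => p (f i))}

/-- The tower function: `twr 1 x = x` and `twr (i+1) x = 2 ^ twr i x`. -/
def twr (k x : ℕ) : ℕ := (fun y => 2 ^ y)^[k - 1] x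

/-- `t` is an `ε`-sample of the interval `[a, b]`: an increasing tuple of points of
`[a, b]` meeting every subinterval of `[a, b]` of length `ε`. -/
def IsEpsSample (a b ε : ℝ) {n : ℕ} (t : Fin n → ℝ) : Prop :=
  StrictMono t ∧ (∀ i, t i ∈ Set.Icc a b) ∧
    ∀ x : ℝ, Set.Icc x (x + ε) ⊆ Set.Icc a b → ∃ i, t i ∈ Set.Icc x (x + ε)

/-- All `(k+1)`-element subsets of the index interval `[a, b]` have the same sign. -/
def IntervalHomog {n : ℕ} (k : ℕ) (sgn : Finset (Fin n) → Bool) (a b : Fin n) : Prop :=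
  ∃ σ : Bool, ∀ s : Finset (Fin n), s.card = k + 1 → (∀ i ∈ s, a ≤ i ∧ i ≤ b) → sgn s = σ

/-- `c 0 = 0 < c 1 < ⋯ < c m = n - 1` are the cut points of the greedy partition of the
`k`-sequence on `Fin n` with sign function `sgn` into the `m` blocks
`[c 0, c 1], [c 1, c 2], …, [c (m-1), c m]` (consecutive blocks overlap in one point):
each block has all its `(k+1)`-element subsets of the same sign, and each block is
maximal with this property (cannot be extended to the right). -/
def IsGreedyPartition {n : ℕ} (k : ℕ) (sgn : Finset (Fin n) → Bool) (m : ℕ)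
    (c : Fin (m + 1) → Fin n) : Prop :=
  (c 0 : ℕ) = 0 ∧ (c (Fin.last m) : ℕ) = n - 1 ∧ StrictMono c ∧
    (∀ j : Fin m, IntervalHomog k sgn (c j.castSucc) (c j.succ)) ∧
    (∀ j : Fin m, ∀ e : Fin n, c j.succ < e → ¬ IntervalHomog k sgn (c j.castSucc) e)

/-- A `k`-sequence is a flip `k`-sequence if for every `k`-element subset `A` of indices
the sign sequence `(sgn (insert i A) : i ∉ A)` (indices in increasing order) has at most
one sign change; for `±`-valued sequences this says there are no positions `i < j < l`
with `sgn (insert i A) ≠ sgn (insert j A)` and `sgn (insert j A) ≠ sgn (insert l A)`. -/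
def FlipSeq {n : ℕ} (k : ℕ) (sgn : Finset (Fin n) → Bool) : Prop :=
  ∀ A : Finset (Fin n), A.card = k →
    ¬ ∃ i j l : Fin n, i < j ∧ j < l ∧ i ∉ A ∧ j ∉ A ∧ l ∉ A ∧
      sgn (insert i A) ≠ sgn (insert j A) ∧ sgn (insert j A) ≠ sgn (insert l A)

/-!
Every block `[c_j, c_{j+1}]` of the greedy partition except the last stops being homogeneous
when `c_{j+1} + 1` is added. This is witnessed by a set `Q_j` of `k + 2` points of
`[c_j, c_{j+1} + 1]` containing `c_{j+1}` and `c_{j+1} + 1` together with two `(k+1)`-subsets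
of opposite signs. Keep only `c_0` and the witnesses. Each block of the subsequence lies in a
block of `S`, so it stays homogeneous, and `Q_j` still stops block `j` from growing; hence the
greedy partition of the subsequence is cut at `c_0, …, c_{m-1}` and `c_{m-1} + 1`. Block `j`
then consists of `c_j`, possibly `c_j + 1`, and `Q_j` without its top point: at most `k + 3`
points. Because the blocks are this short, every `2k + 5` consecutive points contain a whole
witness `Q_j`.
-/

section Mixed

variable {α β : Type*} {k : ℕ} {sgn : Finset α → Bool} {Q R : Finset α}

def IsMixed (k : ℕ) (sgn : Finset α → Bool) (Q : Finset α) : Prop :=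
  ∃ s t : Finset α, s.card = k + 1 ∧ t.card = k + 1 ∧ s ⊆ Q ∧ t ⊆ Q ∧
    sgn s = true ∧ sgn t = false

theorem IsMixed.mono (h : IsMixed k sgn Q) (hQR : Q ⊆ R) : IsMixed k sgn R :=
  let ⟨s, t, hs, ht, hsQ, htQ, hst⟩ := h
  ⟨s, t, hs, ht, hsQ.trans hQR, htQ.trans hQR, hst⟩

theorem isMixed_of_ne {s t : Finset α} (hs : s.card = k + 1) (ht : t.card = k + 1)
    (hsQ : s ⊆ Q) (htQ : t ⊆ Q) (hst : sgn s ≠ sgn t) : IsMixed k sgn Q := by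
  cases h : sgn s
  · exact ⟨t, s, ht, hs, htQ, hsQ, by simpa [h] using hst.symm, h⟩
  · exact ⟨s, t, hs, ht, hsQ, htQ, h, by simpa [h] using hst.symm⟩

theorem IsMixed.exists_ne (h : IsMixed k sgn Q) (σ : Bool) :
    ∃ t ⊆ Q, t.card = k + 1 ∧ sgn t ≠ σ := by
  obtain ⟨s, t, hs, ht, hsQ, htQ, hs', ht'⟩ := h
  cases σ
  · exact ⟨s, hsQ, hs, by simp [hs']⟩
  · exact ⟨t, htQ, ht, by simp [ht']⟩

theorem IsMixed.add_two_le_card (h : IsMixed k sgn Q) : k + 2 ≤ Q.card := by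
  obtain ⟨s, t, hs, ht, hsQ, htQ, hs', ht'⟩ := h
  by_contra! hQ
  rw [Finset.eq_of_subset_of_card_le hsQ (by omega)] at hs'
  rw [Finset.eq_of_subset_of_card_le htQ (by omega), hs'] at ht'
  exact Bool.true_eq_false ▸ ht'

theorem isMixed_image_iff [DecidableEq β] {g : α → β} (hg : Function.Injective g)
    {sgn : Finset β → Bool} :
    IsMixed k sgn (Q.image g) ↔ IsMixed k (fun s => sgn (s.image g)) Q := by
  constructor
  · rintro ⟨s, t, hs, ht, hsQ, htQ, hs', ht'⟩
    obtain ⟨s, hs₀, rfl⟩ := Finset.subset_image_iff.1 hsQ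
    obtain ⟨t, ht₀, rfl⟩ := Finset.subset_image_iff.1 htQ
    rw [Finset.card_image_of_injective _ hg] at hs ht
    exact ⟨s, t, hs, ht, hs₀, ht₀, hs', ht'⟩
  · rintro ⟨s, t, hs, ht, hsQ, htQ, hs', ht'⟩
    exact ⟨s.image g, t.image g, by rwa [Finset.card_image_of_injective _ hg],
      by rwa [Finset.card_image_of_injective _ hg], Finset.image_subset_image hsQ,
      Finset.image_subset_image htQ, hs', ht'⟩

end Mixed

theorem Finset.exists_notMem_and_mem_insert_of_card_lt {α : Type*} [DecidableEq α]
    {B S : Finset α} {y : α} (hy : y ∈ S) (h : B.card < S.card) :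
    ∃ x ∈ S, x ∉ B ∧ y ∈ insert x B := by
  by_cases hyB : y ∈ B
  · obtain ⟨x, hx, hxB⟩ := Finset.exists_mem_notMem_of_card_lt_card h
    exact ⟨x, hx, hxB, Finset.mem_insert_of_mem hyB⟩
  · exact ⟨y, hy, hyB, Finset.mem_insert_self _ _⟩

theorem exists_le_and_lt_add_of_succ_le_add {N x D : ℕ} (f : Fin (N + 1) → ℕ)
    (h0 : f 0 < x + D) (hstep : ∀ t : Fin N, f t.succ ≤ f t.castSucc + D) :
    ∀ M : Fin (N + 1), x ≤ f M → ∃ t ≤ M, x ≤ f t ∧ f t < x + D := by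
  intro M
  induction M using Fin.induction with
  | zero => exact fun hx => ⟨0, le_rfl, hx, h0⟩
  | succ t ih =>
    intro hx
    by_cases ht : x ≤ f t.castSucc
    · obtain ⟨s, hs, hxs, hsD⟩ := ih ht
      exact ⟨s, hs.trans Fin.castSucc_lt_succ.le, hxs, hsD⟩
    · exact ⟨t.succ, le_rfl, hx, by have := hstep t; omega⟩

section Restriction

variable {k n n' : ℕ} {sgn : Finset (Fin n) → Bool}

theorem isMixed_Icc_iff {a b : Fin n} :
    IsMixed k sgn (Finset.Icc a b) ↔
      ∃ s t : Finset (Fin n), s.card = k + 1 ∧ t.card = k + 1 ∧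
        (∀ i ∈ s, a ≤ i ∧ i ≤ b) ∧ (∀ i ∈ t, a ≤ i ∧ i ≤ b) ∧
        sgn s = true ∧ sgn t = false := by
  simp only [IsMixed, Finset.subset_iff, Finset.mem_Icc]

theorem intervalHomog_iff_not_isMixed {a b : Fin n} :
    IntervalHomog k sgn a b ↔ ¬ IsMixed k sgn (Finset.Icc a b) := by
  rw [isMixed_Icc_iff]
  constructor
  · rintro ⟨σ, hσ⟩ ⟨s, t, hs, ht, has, hat, hs', ht'⟩
    rw [hσ s hs has] at hs'
    rw [hσ t ht hat, hs'] at ht'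
    exact Bool.true_eq_false ▸ ht'
  · intro h
    by_contra hnot
    simp only [IntervalHomog, not_exists, not_forall, exists_prop] at hnot
    obtain ⟨s, hs, has, hs'⟩ := hnot false
    obtain ⟨t, ht, hat, ht'⟩ := hnot true
    exact h ⟨s, t, hs, ht, has, hat, by simpa using hs', by simpa using ht'⟩

variable {g : Fin n' → Fin n}

theorem IntervalHomog.comp_image (hg : StrictMono g) {x y : Fin n} {a b : Fin n'}
    (h : IntervalHomog k sgn x y) (hx : x ≤ g a) (hy : g b ≤ y) :
    IntervalHomog k (fun s => sgn (s.image g)) a b := by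
  rw [intervalHomog_iff_not_isMixed, ← isMixed_image_iff hg.injective] at *
  refine fun hmix => h (hmix.mono fun w hw => ?_)
  obtain ⟨i, hi, rfl⟩ := Finset.mem_image.1 hw
  rw [Finset.mem_Icc] at hi ⊢
  exact ⟨hx.trans (hg.monotone hi.1), (hg.monotone hi.2).trans hy⟩

theorem IsMixed.comp_image_Icc (hg : StrictMono g) {Q : Finset (Fin n)} (hQ : ↑Q ⊆ Set.range g)
    {a b : Fin n'} (hQab : Q ⊆ Finset.Icc (g a) (g b)) (h : IsMixed k sgn Q) :
    IsMixed k (fun s => sgn (s.image g)) (Finset.Icc a b) := by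
  rw [← Set.image_univ, Finset.subset_set_image_iff] at hQ
  obtain ⟨Q, -, rfl⟩ := hQ
  rw [isMixed_image_iff hg.injective] at h
  refine h.mono fun i hi => ?_
  have hgi := Finset.mem_Icc.1 (hQab (Finset.mem_image_of_mem g hi))
  exact Finset.mem_Icc.2 ⟨hg.le_iff_le.1 hgi.1, hg.le_iff_le.1 hgi.2⟩

theorem card_Icc_le_card_inter_Icc (hg : StrictMono g) {G : Finset (Fin n)} (hG : ∀ i, g i ∈ G)
    (a b : Fin n') : (Finset.Icc a b).card ≤ (G ∩ Finset.Icc (g a) (g b)).card := by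
  rw [← Finset.card_image_of_injective _ hg.injective]
  refine Finset.card_le_card fun w hw => ?_
  obtain ⟨i, hi, rfl⟩ := Finset.mem_image.1 hw
  rw [Finset.mem_Icc] at hi
  exact Finset.mem_inter.2 ⟨hG i, Finset.mem_Icc.2 ⟨hg.monotone hi.1, hg.monotone hi.2⟩⟩

end Restriction

section Witnesses

variable {k n m : ℕ} {sgn : Finset (Fin n) → Bool}

structure IsBreakWitness (k : ℕ) (sgn : Finset (Fin n) → Bool) (a b e : Fin n)
    (Q : Finset (Fin n)) : Prop where
  val_eq : (e : ℕ) = b + 1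
  subset_Icc : Q ⊆ Finset.Icc a e
  right_mem : b ∈ Q
  ext_mem : e ∈ Q
  card_eq : Q.card = k + 2
  isMixed : IsMixed k sgn Q

theorem IntervalHomog.exists_isBreakWitness {a b e : Fin n} (hab : IntervalHomog k sgn a b)
    (he : (e : ℕ) = b + 1) (hae : ¬ IntervalHomog k sgn a e) :
    ∃ Q, IsBreakWitness k sgn a b e Q := by
  obtain ⟨σ, hσ⟩ := hab
  have hσ' : ∀ s ⊆ Finset.Icc a b, s.card = k + 1 → sgn s = σ := fun s hs hcard =>
    hσ s hcard fun i hi => Finset.mem_Icc.1 (hs hi)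
  have hIcc : ∀ {i}, i ∈ Finset.Icc a e → i ≠ e → i ∈ Finset.Icc a b := by
    intro i hi hie
    rw [Finset.mem_Icc] at hi ⊢
    have : (i : ℕ) ≤ e := hi.2
    have := Fin.val_ne_of_ne hie
    exact ⟨hi.1, Fin.le_def.2 (by omega)⟩
  rw [intervalHomog_iff_not_isMixed, not_not] at hae
  have hcard : k < (Finset.Icc a b).card := by
    have := hae.add_two_le_card
    rw [Fin.card_Icc] at this ⊢
    omega
  obtain ⟨T, hTae, hT, hTσ⟩ := hae.exists_ne σ
  -- a set of sign other than `σ` cannot lie in `[a, b]`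
  have heT : e ∈ T := by
    by_contra heT
    exact hTσ (hσ' T (fun i hi => hIcc (hTae hi) fun h => heT (h ▸ hi)) hT)
  have hB : (T.erase e).card = k := by rw [Finset.card_erase_of_mem heT, hT, Nat.add_sub_cancel]
  have hbab : b ∈ Finset.Icc a b :=
    Finset.mem_Icc.2 ⟨Finset.nonempty_Icc.1 (Finset.card_pos.1 (by omega)), le_rfl⟩
  obtain ⟨x, hxab, hxB, hbx⟩ :=
    Finset.exists_notMem_and_mem_insert_of_card_lt hbab (hB ▸ hcard)
  have hxT : x ∉ T := fun hx => hxB (Finset.mem_erase.2 ⟨fun hxe => by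
    have : (x : ℕ) ≤ b := (Finset.mem_Icc.1 hxab).2
    rw [hxe] at this; omega, hx⟩)
  have hP : (insert x (T.erase e)).card = k + 1 := by rw [Finset.card_insert_of_notMem hxB, hB]
  have hPab : insert x (T.erase e) ⊆ Finset.Icc a b := Finset.insert_subset hxab fun i hi =>
    hIcc (hTae (Finset.mem_of_mem_erase hi)) (Finset.ne_of_mem_erase hi)
  have hPT : insert x (T.erase e) ⊆ insert x T :=
    Finset.insert_subset_insert _ (Finset.erase_subset _ _)
  refine ⟨insert x T, he, Finset.insert_subset (Finset.Icc_subset_Icc_right ?_ hxab) hTae,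
    hPT hbx, Finset.mem_insert_of_mem heT, by rw [Finset.card_insert_of_notMem hxT, hT],
    isMixed_of_ne hP hT hPT (Finset.subset_insert _ _) ((hσ' _ hPab hP).trans_ne hTσ.symm)⟩
  exact Fin.le_def.2 (by omega)

def IsBreakWitnessFamily (k : ℕ) (sgn : Finset (Fin n) → Bool) (c : Fin (m + 1) → Fin n)
    (e : Fin m → Fin n) (Q : Fin m → Finset (Fin n)) : Prop :=
  ∀ j : Fin m, (j : ℕ) + 1 < m → IsBreakWitness k sgn (c j.castSucc) (c j.succ) (e j) (Q j)

variable {c : Fin (m + 1) → Fin n}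

theorem IsGreedyPartition.exists_isBreakWitnessFamily (hc : IsGreedyPartition k sgn m c) :
    ∃ (e : Fin m → Fin n) (Q : Fin m → Finset (Fin n)), IsBreakWitnessFamily k sgn c e Q := by
  obtain ⟨-, hlast, hmono, hhom, hmax⟩ := hc
  have h : ∀ j : Fin m, ∃ e Q, (j : ℕ) + 1 < m →
      IsBreakWitness k sgn (c j.castSucc) (c j.succ) e Q := by
    intro j
    by_cases hj : (j : ℕ) + 1 < m
    · have : (c j.succ : ℕ) < c (Fin.last m) := hmono (Fin.lt_def.2 (by simpa using hj))
      obtain ⟨Q, hQ⟩ := (hhom j).exists_isBreakWitness (e := ⟨c j.succ + 1, by omega⟩) rfl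
        (hmax j _ (Nat.lt_succ_self _))
      exact ⟨_, Q, fun _ => hQ⟩
    · exact ⟨c 0, ∅, fun h => absurd h hj⟩
  choose e Q hQ using h
  exact ⟨e, Q, hQ⟩

def groundSet (c : Fin (m + 1) → Fin n) (Q : Fin m → Finset (Fin n)) : Finset (Fin n) :=
  insert (c 0) ((Finset.univ.filter fun j : Fin m => (j : ℕ) + 1 < m).biUnion Q)

variable {e : Fin m → Fin n} {Q : Fin m → Finset (Fin n)}

theorem mem_groundSet {w : Fin n} :
    w ∈ groundSet c Q ↔ w = c 0 ∨ ∃ j : Fin m, (j : ℕ) + 1 < m ∧ w ∈ Q j := by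
  simp [groundSet]

theorem subset_groundSet {j : Fin m} (hj : (j : ℕ) + 1 < m) : Q j ⊆ groundSet c Q :=
  fun _ hw => mem_groundSet.2 (Or.inr ⟨j, hj, hw⟩)

theorem cut_mem_groundSet (hQ : IsBreakWitnessFamily k sgn c e Q) {j : Fin (m + 1)}
    (hj : (j : ℕ) < m) : c j ∈ groundSet c Q := by
  cases j using Fin.cases with
  | zero => exact mem_groundSet.2 (Or.inl rfl)
  | succ i =>
    have hi : (i : ℕ) + 1 < m := by simpa using hj
    exact subset_groundSet hi (hQ i hi).right_mem

theorem val_le_of_mem_groundSet (hc : IsGreedyPartition k sgn m c)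
    (hQ : IsBreakWitnessFamily k sgn c e Q) {w : Fin n} (hw : w ∈ groundSet c Q) {j : Fin m}
    (hj : (j : ℕ) + 1 = m) : (w : ℕ) ≤ c j.castSucc + 1 := by
  rcases mem_groundSet.1 hw with rfl | ⟨i, hi, hwi⟩
  · have : (c 0 : ℕ) ≤ c j.castSucc := hc.2.2.1.monotone (Fin.zero_le _)
    omega
  · have hwe : (w : ℕ) ≤ e i := (Finset.mem_Icc.1 ((hQ i hi).subset_Icc hwi)).2
    have hij : (c i.succ : ℕ) ≤ c j.castSucc :=
      hc.2.2.1.monotone (Fin.le_def.2 (by simp only [Fin.val_succ, Fin.val_castSucc]; omega))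
    have := (hQ i hi).val_eq
    omega

theorem val_le_or_mem_erase_of_mem_groundSet (hc : IsGreedyPartition k sgn m c)
    (hQ : IsBreakWitnessFamily k sgn c e Q) {j : Fin m} (hj : (j : ℕ) + 1 < m) {w : Fin n}
    (hwG : w ∈ groundSet c Q) (hw : w ∈ Finset.Icc (c j.castSucc) (c j.succ)) :
    (w : ℕ) ≤ c j.castSucc + 1 ∨ w ∈ (Q j).erase (e j) := by
  have hmono := hc.2.2.1.monotone
  have hwj : (w : ℕ) ≤ c j.succ := (Finset.mem_Icc.1 hw).2
  have hwej : w ≠ e j := fun h => by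
    have := (hQ j hj).val_eq
    rw [h] at hwj; omega
  rcases mem_groundSet.1 hwG with rfl | ⟨i, hi, hwi⟩
  · exact Or.inl (Nat.le_succ_of_le (hmono (Fin.zero_le _)))
  have hwi' := Finset.mem_Icc.1 ((hQ i hi).subset_Icc hwi)
  have hci : (c i.castSucc : ℕ) ≤ w := hwi'.1
  have hwe : (w : ℕ) ≤ e i := hwi'.2
  have hei := (hQ i hi).val_eq
  rcases lt_trichotomy (i : ℕ) j with hij | hij | hij
  · have : (c i.succ : ℕ) ≤ c j.castSucc :=
      hmono (Fin.le_def.2 (by simp only [Fin.val_succ, Fin.val_castSucc]; omega))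
    exact Or.inl (by omega)
  · obtain rfl : i = j := Fin.ext hij
    exact Or.inr (Finset.mem_erase.2 ⟨hwej, hwi⟩)
  · have : (c j.succ : ℕ) ≤ c i.castSucc :=
      hmono (Fin.le_def.2 (by simp only [Fin.val_succ, Fin.val_castSucc]; omega))
    obtain rfl : w = c j.succ := Fin.ext (by omega)
    exact Or.inr (Finset.mem_erase.2 ⟨hwej, (hQ j hj).right_mem⟩)

theorem card_groundSet_inter_Icc_le (hc : IsGreedyPartition k sgn m c)
    (hQ : IsBreakWitnessFamily k sgn c e Q) {j : Fin m} (hj : (j : ℕ) + 1 < m) :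
    (groundSet c Q ∩ Finset.Icc (c j.castSucc) (c j.succ)).card ≤ k + 3 := by
  have hjj : (c j.castSucc : ℕ) < c j.succ := hc.2.2.1 Fin.castSucc_lt_succ
  let f : Fin n := ⟨c j.castSucc + 1, by omega⟩
  have hsub : groundSet c Q ∩ Finset.Icc (c j.castSucc) (c j.succ) ⊆
      Finset.Icc (c j.castSucc) f ∪ (Q j).erase (e j) := by
    intro w hw
    obtain ⟨hwG, hwj⟩ := Finset.mem_inter.1 hw
    rcases val_le_or_mem_erase_of_mem_groundSet hc hQ hj hwG hwj with hwf | hwQ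
    · exact Finset.mem_union_left _ (Finset.mem_Icc.2 ⟨(Finset.mem_Icc.1 hwj).1, hwf⟩)
    · exact Finset.mem_union_right _ hwQ
  calc _ ≤ (Finset.Icc (c j.castSucc) f ∪ (Q j).erase (e j)).card := Finset.card_le_card hsub
    _ ≤ (Finset.Icc (c j.castSucc) f).card + ((Q j).erase (e j)).card :=
      Finset.card_union_le _ _
    _ = k + 3 := by
      rw [Fin.card_Icc, Finset.card_erase_of_mem (hQ j hj).ext_mem, (hQ j hj).card_eq]
      simp only [f]
      omega

end Witnesses

section Reduction

variable {k n n' m : ℕ} {sgn : Finset (Fin n) → Bool} {c : Fin (m + 1) → Fin n}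
  {e : Fin m → Fin n} {Q : Fin m → Finset (Fin n)} {g : Fin n' → Fin n}
  {c' : Fin (m + 1) → Fin n'}

structure IsReduction (k : ℕ) (sgn : Finset (Fin n) → Bool) (c : Fin (m + 1) → Fin n)
    (e : Fin m → Fin n) (Q : Fin m → Finset (Fin n)) (g : Fin n' → Fin n)
    (c' : Fin (m + 1) → Fin n') : Prop where
  isGreedyPartition : IsGreedyPartition k sgn m c
  isBreakWitnessFamily : IsBreakWitnessFamily k sgn c e Q
  strictMono : StrictMono g
  range_eq : Set.range g = groundSet c Q
  cut_eq : ∀ j : Fin (m + 1), (j : ℕ) < m → g (c' j) = c j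
  val_cut_last : ∀ j : Fin m, (j : ℕ) + 1 = m → (g (c' j.succ) : ℕ) = c j.castSucc + 1

theorem exists_isReduction (hm : 2 ≤ m) (hc : IsGreedyPartition k sgn m c)
    (hQ : IsBreakWitnessFamily k sgn c e Q) :
    ∃ c' : Fin (m + 1) → Fin (groundSet c Q).card,
      IsReduction k sgn c e Q ((groundSet c Q).orderEmbOfFin rfl) c' := by
  have hrange := (groundSet c Q).range_orderEmbOfFin rfl
  let jt : Fin m := ⟨m - 2, by omega⟩
  have hjt : (jt : ℕ) + 1 < m := by simp only [jt]; omega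
  have h : ∀ i : Fin (m + 1), ∃ p, (groundSet c Q).orderEmbOfFin rfl p =
      if (i : ℕ) < m then c i else e jt := by
    intro i
    rw [← Set.mem_range, hrange, Finset.mem_coe]
    split_ifs with hi
    · exact cut_mem_groundSet hQ hi
    · exact subset_groundSet hjt (hQ jt hjt).ext_mem
  choose c' hc' using h
  refine ⟨c', hc, hQ, OrderEmbedding.strictMono _, hrange, fun j hj => by rw [hc', if_pos hj],
    fun j hj => ?_⟩
  rw [hc', if_neg (by simp only [Fin.val_succ]; omega), (hQ jt hjt).val_eq,
    show jt.succ = j.castSucc from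
      Fin.ext (by simp only [jt, Fin.val_succ, Fin.val_castSucc]; omega)]

namespace IsReduction

theorem apply_mem_groundSet (h : IsReduction k sgn c e Q g c') (i : Fin n') :
    g i ∈ groundSet c Q := by
  rw [← Finset.mem_coe, ← h.range_eq]
  exact Set.mem_range_self i

theorem cut_castSucc (h : IsReduction k sgn c e Q g c') (j : Fin m) :
    g (c' j.castSucc) = c j.castSucc :=
  h.cut_eq _ (by simp)

theorem val_cut_succ_le (h : IsReduction k sgn c e Q g c') (j : Fin m) :
    (g (c' j.succ) : ℕ) ≤ c j.succ := by
  by_cases hj : (j : ℕ) + 1 < m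
  · rw [h.cut_eq _ (by simpa using hj)]
  · have : (c j.castSucc : ℕ) < c j.succ := h.isGreedyPartition.2.2.1 Fin.castSucc_lt_succ
    rw [h.val_cut_last j (by omega)]
    omega

theorem strictMono_cut (h : IsReduction k sgn c e Q g c') : StrictMono c' := by
  refine Fin.strictMono_iff_lt_succ.2 fun j => h.strictMono.lt_iff_lt.1 ?_
  rw [h.cut_castSucc]
  by_cases hj : (j : ℕ) + 1 < m
  · rw [h.cut_eq _ (by simpa using hj)]
    exact h.isGreedyPartition.2.2.1 Fin.castSucc_lt_succ
  · exact Fin.lt_def.2 (by rw [h.val_cut_last j (by omega)]; omega)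

theorem val_cut_zero (h : IsReduction k sgn c e Q g c') (hm : 0 < m) : (c' 0 : ℕ) = 0 := by
  have hle : c' 0 ≤ ⟨0, (c' 0).pos⟩ := h.strictMono.le_iff_le.1 (by
    rw [h.cut_eq 0 hm]
    exact Fin.le_def.2 (by rw [h.isGreedyPartition.1]; exact Nat.zero_le _))
  exact Nat.le_zero.1 hle

theorem val_cut_last_eq (h : IsReduction k sgn c e Q g c') (hm : 0 < m) :
    (c' (Fin.last m) : ℕ) = n' - 1 := by
  let j : Fin m := ⟨m - 1, by omega⟩
  have hj : j.succ = Fin.last m := Fin.ext (by simp only [j, Fin.val_succ, Fin.val_last]; omega)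
  have hle : (⟨n' - 1, by have := (c' 0).pos; omega⟩ : Fin n') ≤ c' (Fin.last m) := by
    refine h.strictMono.le_iff_le.1 (Fin.le_def.2 ?_)
    rw [← hj, h.val_cut_last j (by simp only [j]; omega)]
    exact val_le_of_mem_groundSet h.isGreedyPartition h.isBreakWitnessFamily
      (h.apply_mem_groundSet _) (by simp only [j]; omega)
  have := (c' (Fin.last m)).isLt
  exact le_antisymm (by omega) hle

theorem intervalHomog_cut (h : IsReduction k sgn c e Q g c') (j : Fin m) :
    IntervalHomog k (fun s => sgn (s.image g)) (c' j.castSucc) (c' j.succ) :=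
  (h.isGreedyPartition.2.2.2.1 j).comp_image h.strictMono (h.cut_castSucc j).ge
    (h.val_cut_succ_le j)

theorem isMixed_Icc_of_cut_lt (h : IsReduction k sgn c e Q g c') {j : Fin m}
    (hj : (j : ℕ) + 1 < m) {b : Fin n'} (hb : c' j.succ < b) :
    IsMixed k (fun s => sgn (s.image g)) (Finset.Icc (c' j.castSucc) b) := by
  have hQj := h.isBreakWitnessFamily j hj
  have hcb : (c j.succ : ℕ) < g b := by
    rw [← h.cut_eq _ (by simpa using hj)]
    exact h.strictMono hb
  refine hQj.isMixed.comp_image_Icc h.strictMono ?_ fun w hw => ?_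
  · rw [h.range_eq]
    exact Finset.coe_subset.2 (subset_groundSet hj)
  · have hw' := Finset.mem_Icc.1 (hQj.subset_Icc hw)
    have hwe : (w : ℕ) ≤ e j := hw'.2
    rw [h.cut_castSucc]
    exact Finset.mem_Icc.2 ⟨hw'.1, Fin.le_def.2 (by have := hQj.val_eq; omega)⟩

theorem not_intervalHomog_of_cut_lt (h : IsReduction k sgn c e Q g c') (j : Fin m) (b : Fin n')
    (hb : c' j.succ < b) : ¬ IntervalHomog k (fun s => sgn (s.image g)) (c' j.castSucc) b := by
  by_cases hj : (j : ℕ) + 1 < m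
  · exact intervalHomog_iff_not_isMixed.not_left.2 (h.isMixed_Icc_of_cut_lt hj hb)
  · have hlast : j.succ = Fin.last m := Fin.ext (by simp only [Fin.val_succ, Fin.val_last]; omega)
    have := h.val_cut_last_eq (by omega)
    rw [← hlast] at this
    have := Fin.lt_def.1 hb
    omega

theorem isGreedyPartition_cut (h : IsReduction k sgn c e Q g c') (hm : 0 < m) :
    IsGreedyPartition k (fun s => sgn (s.image g)) m c' :=
  ⟨h.val_cut_zero hm, h.val_cut_last_eq hm, h.strictMono_cut, h.intervalHomog_cut,
    h.not_intervalHomog_of_cut_lt⟩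

theorem val_cut_succ_of_last (h : IsReduction k sgn c e Q g c') {j : Fin m}
    (hj : (j : ℕ) + 1 = m) : (c' j.succ : ℕ) = c' j.castSucc + 1 := by
  have hcard := card_Icc_le_card_inter_Icc h.strictMono (fun _ => Finset.mem_univ _)
    (c' j.castSucc) (c' j.succ)
  rw [Finset.univ_inter, Fin.card_Icc, Fin.card_Icc, h.cut_castSucc, h.val_cut_last j hj] at hcard
  have := Fin.lt_def.1 (h.strictMono_cut (Fin.castSucc_lt_succ (i := j)))
  omega

theorem val_cut_succ_le_add (h : IsReduction k sgn c e Q g c') (j : Fin m) :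
    (c' j.succ : ℕ) ≤ c' j.castSucc + (k + 2) := by
  by_cases hj : (j : ℕ) + 1 < m
  · have hcard := card_Icc_le_card_inter_Icc h.strictMono h.apply_mem_groundSet
      (c' j.castSucc) (c' j.succ)
    rw [h.cut_castSucc, h.cut_eq _ (by simpa using hj), Fin.card_Icc] at hcard
    have := card_groundSet_inter_Icc_le h.isGreedyPartition h.isBreakWitnessFamily hj
    omega
  · have := h.val_cut_succ_of_last (j := j) (by omega)
    omega

theorem isMixed_window (h : IsReduction k sgn c e Q g c') (hm : 2 ≤ m) (a : Fin n')
    (ha : (a : ℕ) + (2 * k + 5) ≤ n') :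
    ∃ s t : Finset (Fin n'), s.card = k + 1 ∧ t.card = k + 1 ∧
      (∀ i ∈ s, a ≤ i ∧ (i : ℕ) ≤ (a : ℕ) + (2 * k + 4)) ∧
      (∀ i ∈ t, a ≤ i ∧ (i : ℕ) ≤ (a : ℕ) + (2 * k + 4)) ∧
      sgn (s.image g) = true ∧ sgn (t.image g) = false := by
  let b : Fin n' := ⟨a + (2 * k + 4), by omega⟩
  suffices IsMixed k (fun s => sgn (s.image g)) (Finset.Icc a b) from isMixed_Icc_iff.1 this
  let j₁ : Fin m := ⟨m - 2, by omega⟩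
  let j₂ : Fin m := ⟨m - 1, by omega⟩
  have hM : (a : ℕ) ≤ c' j₁.castSucc := by
    have h₁ := h.val_cut_succ_le_add j₁
    have h₂ := h.val_cut_succ_of_last (j := j₂) (by simp only [j₂]; omega)
    have h₃ := h.val_cut_last_eq (by omega)
    rw [show j₁.succ = j₂.castSucc from
      Fin.ext (by simp only [j₁, j₂, Fin.val_succ, Fin.val_castSucc]; omega)] at h₁
    rw [show j₂.succ = Fin.last m from
      Fin.ext (by simp only [j₂, Fin.val_succ, Fin.val_last]; omega)] at h₂
    omega
  obtain ⟨t, ht, hat, hta⟩ := exists_le_and_lt_add_of_succ_le_add (fun i => (c' i : ℕ))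
    (by rw [h.val_cut_zero (by omega)]; omega) h.val_cut_succ_le_add _ hM
  have htm : (t : ℕ) + 1 < m := by
    have := Fin.le_def.1 ht
    simp only [j₁, Fin.val_castSucc] at this
    omega
  let J : Fin m := ⟨t, by omega⟩
  have hJ := h.val_cut_succ_le_add J
  rw [show J.castSucc = t from rfl] at hJ
  refine (h.isMixed_Icc_of_cut_lt (j := J) htm (b := b) ?_).mono
    (Finset.Icc_subset_Icc_left hat)
  exact Fin.lt_def.2 (by simp only [b]; omega)

end IsReduction

end Reduction

/-- Every `k`-sequence whose greedy partition has `m ≥ 2` blocks has a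
subsequence (with the inherited sign function) whose greedy partition also has `m` blocks,
all of whose blocks have at most `k+3` elements, whose last block has exactly `2` elements,
and in which every string of `2k+5` consecutive elements contains both a positive and a
negative `(k+1)`-element subset. -/
theorem reduced_k_sequence :
    ∀ (k n m : ℕ) (sgn : Finset (Fin n) → Bool) (c : Fin (m + 1) → Fin n),
      2 ≤ m → IsGreedyPartition k sgn m c →
      ∃ (n' : ℕ) (g : Fin n' → Fin n), StrictMono g ∧
        ∃ c' : Fin (m + 1) → Fin n',
          IsGreedyPartition k (fun s => sgn (s.image g)) m c' ∧
          (∀ j : Fin m, (c' j.succ : ℕ) - (c' j.castSucc : ℕ) + 1 ≤ k + 3) ∧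
          (∀ j : Fin m, (j : ℕ) = m - 1 → (c' j.succ : ℕ) = (c' j.castSucc : ℕ) + 1) ∧
          (∀ a : Fin n', (a : ℕ) + (2 * k + 5) ≤ n' →
            ∃ s t : Finset (Fin n'), s.card = k + 1 ∧ t.card = k + 1 ∧
              (∀ i ∈ s, a ≤ i ∧ (i : ℕ) ≤ (a : ℕ) + (2 * k + 4)) ∧
              (∀ i ∈ t, a ≤ i ∧ (i : ℕ) ≤ (a : ℕ) + (2 * k + 4)) ∧
              sgn (s.image g) = true ∧ sgn (t.image g) = false) := by
  intro k n m sgn c hm hc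
  obtain ⟨e, Q, hQ⟩ := hc.exists_isBreakWitnessFamily
  obtain ⟨c', h⟩ := exists_isReduction hm hc hQ
  refine ⟨_, _, h.strictMono, c', h.isGreedyPartition_cut (by omega), fun j => ?_,
    fun j hj => h.val_cut_succ_of_last (by have := j.isLt; omega), h.isMixed_window hm⟩
  have := h.val_cut_succ_le_add j
  omega
end

section
/- For every k ≥ 1 there exists a constant c(k) such that the greedy partition of every flip k-sequence has at most c(k) blocks. -/
open Set

/-! A *switch* of `f` at level `k` is a `k`-set `B` with points `u < v` outside it such that
`f (B ∪ {u}) ≠ f (B ∪ {v})`. Every non-final block of the greedy partition ends in a switch, and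
switches taken three blocks apart are ordered, so it suffices to bound the length of ordered chains
of switches in a flip `k`-sequence. By the flip property the row of `B` takes the switch's first
value everywhere left of it. For `k = 0` two ordered switches therefore give two sign changes of
one row. For `k + 1`, anchor at a point `a` of the first switch: `X ↦ f (X ∪ {a})` is a flip
`k`-sequence right of `a`. Among three consecutive later switches two have different first values,
possibly after merging two equal ones; their bases then get different anchored values, and an
exchange argument between the two bases produces a switch of the anchored sequence. This gives
chains of length at most `3 c(k) + 3`. -/

section Switches

variable {α β : Type*} [LinearOrder α] {k : ℕ} {f : Finset α → β} {S : Set α}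

/-- The flip property of `FlipSeq`, restricted to the points of `S`. -/
def IsFlipOn (k : ℕ) (f : Finset α → β) (S : Set α) : Prop :=
  ∀ A : Finset α, A.card = k → ↑A ⊆ S → ∀ i ∈ S, ∀ j ∈ S, ∀ l ∈ S,
    i ∉ A → j ∉ A → l ∉ A → i < j → j < l →
      f (insert i A) ≠ f (insert j A) → f (insert j A) = f (insert l A)

theorem FlipSeq.isFlipOn_univ {n : ℕ} {sgn : Finset (Fin n) → Bool} (h : FlipSeq k sgn) :
    IsFlipOn k sgn Set.univ := by
  intro A hA _ i _ j _ l _ hi hj hl hij hjl hne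
  by_contra hjl'
  exact h A hA ⟨i, j, l, hij, hjl, hi, hj, hl, hne, hjl'⟩

theorem IsFlipOn.anchor (hf : IsFlipOn (k + 1) f S) {a : α} (ha : a ∈ S) :
    IsFlipOn k (fun X => f (insert a X)) (S \ {a}) := by
  intro A hA hAS i hi j hj l hl hiA hjA hlA hij hjl hne
  have haA : a ∉ A := fun h => (hAS h).2 rfl
  have hins : ∀ x ∈ S \ {a}, x ∉ A → x ∉ insert a A := fun x hx hxA h =>
    (Finset.mem_insert.mp h).elim hx.2 hxA
  simp only [Finset.insert_comm a] at hne ⊢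
  refine hf (insert a A) (by rw [Finset.card_insert_of_notMem haA, hA]) ?_ i hi.1 j hj.1 l hl.1
    (hins i hi hiA) (hins j hj hjA) (hins l hl hlA) hij hjl hne
  rw [Finset.coe_insert]
  exact Set.insert_subset ha (hAS.trans Set.sdiff_subset)

variable (k f) in
structure Switch where
  base : Finset α
  left : α
  right : α
  card_base : base.card = k
  left_lt_right : left < right
  left_notMem : left ∉ base
  right_notMem : right ∉ base
  apply_ne : f (insert left base) ≠ f (insert right base)

namespace Switch

variable (w : Switch k f)

def sign : β := f (insert w.left w.base)

def support : Finset α := insert w.left (insert w.right w.base)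

def Precedes (w₁ w₂ : Switch k f) : Prop := ∀ x ∈ w₁.support, ∀ y ∈ w₂.support, x < y

theorem left_mem_support : w.left ∈ w.support := Finset.mem_insert_self _ _

theorem right_mem_support : w.right ∈ w.support :=
  Finset.mem_insert_of_mem (Finset.mem_insert_self _ _)

theorem base_subset_support : w.base ⊆ w.support :=
  (Finset.subset_insert _ _).trans (Finset.subset_insert _ _)

theorem insert_left_subset_support : insert w.left w.base ⊆ w.support :=
  Finset.insert_subset w.left_mem_support w.base_subset_support

theorem insert_right_subset_support : insert w.right w.base ⊆ w.support :=
  Finset.insert_subset w.right_mem_support w.base_subset_support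

theorem apply_insert_of_lt (hf : IsFlipOn k f S) (hw : ↑w.support ⊆ S) {i : α} (hi : i ∈ S)
    (hlt : ∀ x ∈ w.support, i < x) : f (insert i w.base) = w.sign := by
  by_contra hne
  have hiB : i ∉ w.base := fun h => lt_irrefl i (hlt i (w.base_subset_support h))
  exact w.apply_ne (hf w.base w.card_base (fun x hx => hw (w.base_subset_support hx))
    i hi w.left (hw w.left_mem_support) w.right (hw w.right_mem_support)
    hiB w.left_notMem w.right_notMem (hlt _ w.left_mem_support) w.left_lt_right hne)

end Switch

/-- Exchanging the elements of `Z \ Y` one by one for elements of `Y` walks from `Z` to `Y`;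
the first step that changes the value of `f` is a switch. -/
theorem exists_switch_of_apply_ne {Y Z : Finset α} (hZY : ∀ x ∈ Z, x ∉ Y → ∀ y ∈ Y, x < y)
    (hZ : Z.card = k + 1) (hY : Y.card = k + 1) (hne : f Z ≠ f Y) :
    ∃ w : Switch k f, w.support ⊆ Z ∪ Y ∧ w.sign = f Z := by
  obtain ⟨x, hxZ, hxY⟩ : ∃ x ∈ Z, x ∉ Y := by
    by_contra! h
    exact hne (congrArg f (Finset.eq_of_subset_of_card_le h (by omega)))
  obtain ⟨y, hyY, hyZ⟩ : ∃ y ∈ Y, y ∉ Z := by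
    by_contra! h
    exact hne (congrArg f (Finset.eq_of_subset_of_card_le h (by omega))).symm
  have hyC : y ∉ Z.erase x := fun h => hyZ (Finset.mem_of_mem_erase h)
  have hCcard : (Z.erase x).card = k := by rw [Finset.card_erase_of_mem hxZ, hZ]; rfl
  have hZ' : insert y (Z.erase x) ⊆ Z ∪ Y :=
    Finset.insert_subset (Finset.mem_union_right _ hyY)
      ((Finset.erase_subset x Z).trans Finset.subset_union_left)
  by_cases hstep : f (insert y (Z.erase x)) = f Z
  · have hdecr : (insert y (Z.erase x) \ Y).card < (Z \ Y).card := by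
      rw [Finset.insert_sdiff_of_mem _ hyY, Finset.erase_sdiff_comm,
        Finset.card_erase_of_mem (Finset.mem_sdiff.mpr ⟨hxZ, hxY⟩)]
      exact Nat.pred_lt (Finset.card_ne_zero.mpr ⟨x, Finset.mem_sdiff.mpr ⟨hxZ, hxY⟩⟩)
    obtain ⟨w, hw, hsign⟩ := exists_switch_of_apply_ne (Z := insert y (Z.erase x))
      (fun x' hx' hx'Y => hZY x' ((Finset.mem_union.mp (hZ' hx')).resolve_right hx'Y) hx'Y)
      (by rw [Finset.card_insert_of_notMem hyC, hCcard]) hY (hstep ▸ hne)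
    exact ⟨w, hw.trans (Finset.union_subset hZ' Finset.subset_union_right), hsign.trans hstep⟩
  · refine ⟨⟨Z.erase x, x, y, hCcard, hZY x hxZ hxY y hyY, Finset.notMem_erase x Z, hyC,
      by rwa [Finset.insert_erase hxZ, ne_comm]⟩, ?_, by simp [Switch.sign, Finset.insert_erase hxZ]⟩
    exact Finset.insert_subset (Finset.mem_union_left _ hxZ) hZ'
termination_by (Z \ Y).card

namespace Switch

theorem exists_sign_ne_of_precedes {w₁ w₂ : Switch k f} (h : w₁.Precedes w₂)
    (hsign : w₁.sign = w₂.sign) :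
    ∃ w : Switch k f, w.support ⊆ w₁.support ∪ w₂.support ∧ w.sign ≠ w₂.sign := by
  obtain ⟨w, hw, hws⟩ := exists_switch_of_apply_ne (Z := insert w₁.right w₁.base)
    (Y := insert w₂.left w₂.base)
    (fun x hx _ y hy => h x (w₁.insert_right_subset_support hx) y
      (w₂.insert_left_subset_support hy))
    (by rw [Finset.card_insert_of_notMem w₁.right_notMem, w₁.card_base])
    (by rw [Finset.card_insert_of_notMem w₂.left_notMem, w₂.card_base])
    (fun h' => w₁.apply_ne (hsign.trans h'.symm))
  exact ⟨w, hw.trans (Finset.union_subset_union w₁.insert_right_subset_support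
    w₂.insert_left_subset_support), fun h' => w₁.apply_ne (hsign.trans (hws.symm.trans h').symm)⟩

theorem exists_precedes_sign_ne {w₁ w₂ w₃ : Switch k f} (h₁₂ : w₁.Precedes w₂)
    (h₁₃ : w₁.Precedes w₃) (h₂₃ : w₂.Precedes w₃) :
    ∃ p q : Switch k f, p.Precedes q ∧ p.sign ≠ q.sign ∧
      p.support ∪ q.support ⊆ w₁.support ∪ w₂.support ∪ w₃.support := by
  by_cases hs₁₂ : w₁.sign = w₂.sign
  · by_cases hs₂₃ : w₂.sign = w₃.sign
    · obtain ⟨w, hw, hws⟩ := exists_sign_ne_of_precedes h₁₂ hs₁₂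
      refine ⟨w, w₃, fun x hx y hy => ?_, hs₂₃ ▸ hws,
        Finset.union_subset_union_left hw⟩
      rcases Finset.mem_union.mp (hw hx) with hx | hx
      exacts [h₁₃ x hx y hy, h₂₃ x hx y hy]
    · exact ⟨w₂, w₃, h₂₃, hs₂₃, by intro x; simp only [Finset.mem_union]; tauto⟩
  · exact ⟨w₁, w₂, h₁₂, hs₁₂, Finset.subset_union_left⟩

theorem exists_anchor_switch (hf : IsFlipOn (k + 1) f S) {a : α} (ha : a ∈ S)
    {p q : Switch (k + 1) f} (hp : ↑p.support ⊆ S ∩ Set.Ioi a) (hq : ↑q.support ⊆ S ∩ Set.Ioi a)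
    (hpq : p.Precedes q) (hsign : p.sign ≠ q.sign) :
    ∃ w : Switch k (fun X => f (insert a X)), w.support ⊆ p.support ∪ q.support := by
  have hpa := p.apply_insert_of_lt hf (hp.trans Set.inter_subset_left) ha fun x hx => (hp hx).2
  have hqa := q.apply_insert_of_lt hf (hq.trans Set.inter_subset_left) ha fun x hx => (hq hx).2
  obtain ⟨w, hw, -⟩ := exists_switch_of_apply_ne (f := fun X => f (insert a X))
    (fun x hx _ y hy => hpq x (p.base_subset_support hx) y (q.base_subset_support hy))
    p.card_base q.card_base (by simpa only [hpa, hqa] using hsign)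
  exact ⟨w, hw.trans (Finset.union_subset_union p.base_subset_support q.base_subset_support)⟩

theorem not_precedes_of_isFlipOn_zero (hf : IsFlipOn 0 f S) {w₁ w₂ : Switch 0 f}
    (h₁ : ↑w₁.support ⊆ S) (h₂ : ↑w₂.support ⊆ S) : ¬ w₁.Precedes w₂ := by
  intro h
  have hl := w₂.apply_insert_of_lt hf h₂ (h₁ w₁.left_mem_support) (h _ w₁.left_mem_support)
  have hr := w₂.apply_insert_of_lt hf h₂ (h₁ w₁.right_mem_support) (h _ w₁.right_mem_support)
  rw [Finset.card_eq_zero.mp w₂.card_base] at hl hr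
  exact w₁.apply_ne (by rw [Finset.card_eq_zero.mp w₁.card_base, hl, hr])

theorem exists_anchor_switch_of_precedes (hf : IsFlipOn (k + 1) f S) {a : α} (ha : a ∈ S)
    {w₁ w₂ w₃ : Switch (k + 1) f} (h₁₂ : w₁.Precedes w₂) (h₁₃ : w₁.Precedes w₃)
    (h₂₃ : w₂.Precedes w₃) (hS : ↑(w₁.support ∪ w₂.support ∪ w₃.support) ⊆ S ∩ Set.Ioi a) :
    ∃ w : Switch k (fun X => f (insert a X)),
      w.support ⊆ w₁.support ∪ w₂.support ∪ w₃.support := by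
  obtain ⟨p, q, hpq, hsign, hsub⟩ := exists_precedes_sign_ne h₁₂ h₁₃ h₂₃
  have hpqS : ↑(p.support ∪ q.support) ⊆ S ∩ Set.Ioi a := (Finset.coe_subset.mpr hsub).trans hS
  rw [Finset.coe_union, Set.union_subset_iff] at hpqS
  obtain ⟨w, hw⟩ := exists_anchor_switch hf ha hpqS.1 hpqS.2 hpq hsign
  exact ⟨w, hw.trans hsub⟩

end Switch

theorem exists_anchor_chain (hf : IsFlipOn (k + 1) f S) {a : α} (ha : a ∈ S) :
    ∀ l : List (Switch (k + 1) f), l.Pairwise Switch.Precedes →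
      (∀ w ∈ l, ↑w.support ⊆ S ∩ Set.Ioi a) →
      ∃ l' : List (Switch k (fun X => f (insert a X))), l.length ≤ 3 * l'.length + 2 ∧
        l'.Pairwise Switch.Precedes ∧ ∀ w' ∈ l', ∀ x ∈ w'.support, ∃ w ∈ l, x ∈ w.support
  | [], _, _ => ⟨[], by simp, .nil, by simp⟩
  | [_], _, _ => ⟨[], by simp, .nil, by simp⟩
  | [_, _], _, _ => ⟨[], by simp, .nil, by simp⟩
  | w₁ :: w₂ :: w₃ :: rest, hl, hS => by
    simp only [List.pairwise_cons, List.mem_cons, forall_eq_or_imp] at hl hS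
    obtain ⟨⟨h₁₂, h₁₃, h₁r⟩, ⟨h₂₃, h₂r⟩, h₃r, hrest⟩ := hl
    obtain ⟨hS₁, hS₂, hS₃, hSr⟩ := hS
    have hprec : ∀ x ∈ w₁.support ∪ w₂.support ∪ w₃.support,
        ∀ w ∈ rest, ∀ y ∈ w.support, x < y := by
      intro x hx w hw
      simp only [Finset.mem_union] at hx
      rcases hx with (hx | hx) | hx
      exacts [h₁r w hw x hx, h₂r w hw x hx, h₃r w hw x hx]
    obtain ⟨w, hw⟩ := Switch.exists_anchor_switch_of_precedes hf ha h₁₂ h₁₃ h₂₃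
      (by simp only [Finset.coe_union, Set.union_subset_iff]; exact ⟨⟨hS₁, hS₂⟩, hS₃⟩)
    obtain ⟨l', hlen, hl', hcov⟩ := exists_anchor_chain hf ha rest hrest hSr
    refine ⟨w :: l', by simp only [List.length_cons]; omega, List.pairwise_cons.mpr ⟨?_, hl'⟩, ?_⟩
    · intro w' hw' x hx y hy
      obtain ⟨v, hv, hyv⟩ := hcov w' hw' y hy
      exact hprec x (hw hx) v hv y hyv
    · simp only [List.mem_cons, forall_eq_or_imp]
      refine ⟨fun x hx => ?_, fun w' hw' x hx => ?_⟩
      · have := hw hx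
        simp only [Finset.mem_union] at this
        rcases this with (hx | hx) | hx
        exacts [⟨w₁, by simp, hx⟩, ⟨w₂, by simp, hx⟩, ⟨w₃, by simp, hx⟩]
      · obtain ⟨v, hv, hxv⟩ := hcov w' hw' x hx
        exact ⟨v, by simp [hv], hxv⟩

def switchBound : ℕ → ℕ
  | 0 => 1
  | k + 1 => 3 * switchBound k + 3

theorem length_le_switchBound :
    ∀ {k : ℕ} {f : Finset α → β} {S : Set α} (l : List (Switch k f)), IsFlipOn k f S →
      (∀ w ∈ l, ↑w.support ⊆ S) → l.Pairwise Switch.Precedes → l.length ≤ switchBound k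
  | 0, _, _, [], _, _, _ => Nat.zero_le _
  | 0, _, _, [_], _, _, _ => le_rfl
  | 0, _, _, w₁ :: w₂ :: _, hf, hS, hl =>
    absurd (List.rel_of_pairwise_cons hl (List.mem_cons_self ..))
      (Switch.not_precedes_of_isFlipOn_zero hf (hS w₁ (by simp)) (hS w₂ (by simp)))
  | _ + 1, _, _, [], _, _, _ => Nat.zero_le _
  | k + 1, f, S, w₀ :: l, hf, hS, hl => by
    have ha : w₀.right ∈ S := hS w₀ (List.mem_cons_self ..) w₀.right_mem_support
    obtain ⟨l', hlen, hl', hcov⟩ := exists_anchor_chain hf ha l hl.of_cons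
      fun w hw x hx => ⟨hS w (List.mem_cons_of_mem _ hw) hx,
        List.rel_of_pairwise_cons hl hw _ w₀.right_mem_support x hx⟩
    have := length_le_switchBound l' (hf.anchor ha) (fun w' hw' x hx => by
      obtain ⟨w, hw, hxw⟩ := hcov w' hw' x hx
      exact ⟨hS w (List.mem_cons_of_mem _ hw) hxw,
        (List.rel_of_pairwise_cons hl hw _ w₀.right_mem_support x hxw).ne'⟩) hl'
    simp only [List.length_cons, switchBound]
    omega

end Switches

section Greedy

variable {n k m : ℕ} {sgn : Finset (Fin n) → Bool}

theorem IntervalHomog.exists_switch {a b e : Fin n} (hab : IntervalHomog k sgn a b)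
    (hae : ¬ IntervalHomog k sgn a e) (hbe : b ⋖ e) :
    ∃ w : Switch k sgn, ∀ x ∈ w.support, a ≤ x ∧ x ≤ e := by
  obtain ⟨σ, hσ⟩ := hab
  obtain ⟨s, hs, hsae, hsσ⟩ : ∃ s : Finset (Fin n), s.card = k + 1 ∧
      (∀ i ∈ s, a ≤ i ∧ i ≤ e) ∧ sgn s ≠ σ := by
    by_contra! h
    exact hae ⟨σ, h⟩
  have hle_b : ∀ x ∈ s, x ≠ e → a ≤ x ∧ x ≤ b := fun x hx hxe =>
    ⟨(hsae x hx).1, hbe.le_of_lt (lt_of_le_of_ne (hsae x hx).2 hxe)⟩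
  have he : e ∈ s := by
    by_contra he
    exact hsσ (hσ s hs fun x hx => hle_b x hx (ne_of_mem_of_not_mem hx he))
  have hA : ∀ x ∈ s.erase e, a ≤ x ∧ x ≤ b := fun x hx =>
    hle_b x (Finset.mem_of_mem_erase hx) (Finset.ne_of_mem_erase hx)
  have hAcard : (s.erase e).card = k := by rw [Finset.card_erase_of_mem he, hs]; rfl
  -- otherwise `s` would be all of `[a, e]`, which would then be homogeneous
  obtain ⟨u, hu, huA⟩ : ∃ u, (a ≤ u ∧ u ≤ b) ∧ u ∉ s.erase e := by
    by_contra! h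
    refine hae ⟨sgn s, fun t ht htae => congrArg sgn
      (Finset.eq_of_subset_of_card_le (fun x hx => ?_) (by rw [hs, ht]))⟩
    by_cases hxe : x = e
    · exact hxe ▸ he
    · exact Finset.mem_of_mem_erase (h x ⟨(htae x hx).1,
        hbe.le_of_lt (lt_of_le_of_ne (htae x hx).2 hxe)⟩)
  have hue : u < e := hu.2.trans_lt hbe.lt
  refine ⟨⟨s.erase e, u, e, hAcard, hue, huA, Finset.notMem_erase e s, ?_⟩, ?_⟩
  · rw [Finset.insert_erase he, hσ _ (by rw [Finset.card_insert_of_notMem huA, hAcard]) ?_]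
    · exact hsσ.symm
    · simp only [Finset.mem_insert, forall_eq_or_imp]
      exact ⟨hu, hA⟩
  · simp only [Switch.support, Finset.mem_insert, forall_eq_or_imp]
    exact ⟨⟨hu.1, hue.le⟩, ⟨hu.1.trans hue.le, le_rfl⟩,
      fun x hx => ⟨(hA x hx).1, (hA x hx).2.trans hbe.le⟩⟩

theorem IsGreedyPartition.exists_switch {c : Fin (m + 1) → Fin n}
    (hg : IsGreedyPartition k sgn m c) (j : ℕ) (hj : j + 1 < m) :
    ∃ w : Switch k sgn, ∀ x ∈ w.support,
      c ⟨j, by omega⟩ ≤ x ∧ (x : ℕ) ≤ c ⟨j + 1, by omega⟩ + 1 := by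
  obtain ⟨-, hlast, hmono, hhom, hmax⟩ := hg
  have hlt : (c ⟨j + 1, by omega⟩ : ℕ) < c (Fin.last m) :=
    hmono (Fin.mk_lt_mk.mpr (by omega))
  let e : Fin n := ⟨c ⟨j + 1, by omega⟩ + 1, by omega⟩
  have hce : c ⟨j + 1, by omega⟩ ⋖ e := Fin.covBy_iff.mpr (Nat.covBy_iff_add_one_eq.mpr rfl)
  obtain ⟨w, hw⟩ := (hhom ⟨j, by omega⟩).exists_switch (hmax ⟨j, by omega⟩ e hce.lt) hce
  exact ⟨w, hw⟩

theorem IsGreedyPartition.le_of_flipSeq {c : Fin (m + 1) → Fin n}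
    (hflip : FlipSeq k sgn) (hg : IsGreedyPartition k sgn m c) :
    m ≤ 3 * switchBound k + 1 := by
  choose sw hsw using hg.exists_switch
  have hc : ∀ j j' (hj : j < m + 1) (hj' : j' < m + 1), j < j' →
      (c ⟨j, hj⟩ : ℕ) < c ⟨j', hj'⟩ := fun _ _ _ _ h => hg.2.2.1 (Fin.mk_lt_mk.mpr h)
  -- switches three cuts apart are ordered, as `c (j + 1) + 1 < c (j + 3)`
  have hchain : (List.ofFn fun i : Fin ((m + 1) / 3) => sw (3 * i) (by omega)).Pairwise
      Switch.Precedes := by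
    refine List.pairwise_ofFn.mpr fun i i' hii' x hx y hy => ?_
    have hi := Fin.lt_def.mp hii'
    have h₁ := hc (3 * i + 1) (3 * i + 2) (by omega) (by omega) (by omega)
    have h₂ := hc (3 * i + 2) (3 * i') (by omega) (by omega) (by omega)
    exact Fin.lt_def.mpr (by linarith [(hsw _ _ x hx).2, Fin.le_def.mp (hsw _ _ y hy).1])
  have := length_le_switchBound _ hflip.isFlipOn_univ (fun _ _ => Set.subset_univ _) hchain
  rw [List.length_ofFn] at this
  omega

end Greedy

/-- For every `k ≥ 1` there is a constant `c(k)` such that the greedy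
partition of every flip `k`-sequence has at most `c(k)` blocks. -/
theorem flip_sequence_few_blocks :
    ∀ k : ℕ, 1 ≤ k → ∃ C : ℕ,
      ∀ (n m : ℕ) (sgn : Finset (Fin n) → Bool) (c : Fin (m + 1) → Fin n),
        FlipSeq k sgn → IsGreedyPartition k sgn m c → m ≤ C :=
  fun k _ => ⟨3 * switchBound k + 1, fun _ _ _ _ hflip hg => hg.le_of_flipSeq hflip⟩
end

section
/- The greedy partition of every flip 1-sequence has at most 3 blocks. -/
open Set

lemma flipR {n : ℕ} {sgn : Finset (Fin n) → Bool} (F : FlipSeq 1 sgn)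
    {a i j l : Fin n} (hij : i < j) (hjl : j < l)
    (hia : i ≠ a) (hja : j ≠ a) (hla : l ≠ a)
    (h1 : sgn {i, a} ≠ sgn {j, a}) : sgn {l, a} = sgn {j, a} := by
  by_contra h2
  exact F {a} (Finset.card_singleton a) ⟨i, j, l, hij, hjl, by simpa using hia,
    by simpa using hja, by simpa using hla, h1, fun h => h2 h.symm⟩

lemma flipL {n : ℕ} {sgn : Finset (Fin n) → Bool} (F : FlipSeq 1 sgn)
    {a i j l : Fin n} (hij : i < j) (hjl : j < l)
    (hia : i ≠ a) (hja : j ≠ a) (hla : l ≠ a)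
    (h1 : sgn {j, a} ≠ sgn {l, a}) : sgn {i, a} = sgn {j, a} := by
  by_contra h2
  exact F {a} (Finset.card_singleton a) ⟨i, j, l, hij, hjl, by simpa using hia,
    by simpa using hja, by simpa using hla, h2, h1⟩

lemma pair_in_interval {n : ℕ} {a b x y : Fin n} (h1 : a ≤ x) (h2 : x ≤ b) (h3 : a ≤ y)
    (h4 : y ≤ b) : ∀ i ∈ ({x, y} : Finset (Fin n)), a ≤ i ∧ i ≤ b := by
  intro i hi
  rcases Finset.mem_insert.mp hi with h | h
  · subst h; exact ⟨h1, h2⟩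
  · rw [Finset.mem_singleton.mp h]; exact ⟨h3, h4⟩

lemma homog_get {n : ℕ} {sgn : Finset (Fin n) → Bool} {A B : Fin n}
    (H : IntervalHomog 1 sgn A B) :
    ∃ σ : Bool, ∀ x y : Fin n, x ≠ y → A ≤ x → x ≤ B → A ≤ y → y ≤ B → sgn {x, y} = σ := by
  obtain ⟨σ, hσ⟩ := H
  exact ⟨σ, fun x y hxy h1 h2 h3 h4 =>
    hσ {x, y} (by rw [Finset.card_pair hxy]) (pair_in_interval h1 h2 h3 h4)⟩

lemma non_homog_get {n : ℕ} {sgn : Finset (Fin n) → Bool} {A B : Fin n}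
    (H : ¬ IntervalHomog 1 sgn A B) (σ : Bool) :
    ∃ x y : Fin n, x < y ∧ A ≤ x ∧ y ≤ B ∧ A ≤ y ∧ x ≤ B ∧ sgn {x, y} ≠ σ := by
  unfold IntervalHomog at H
  push_neg at H
  obtain ⟨s, hcard, hmem, hne⟩ := H σ
  obtain ⟨x, y, hxy, rfl⟩ := Finset.card_eq_two.mp hcard
  have hx := hmem x (by simp)
  have hy := hmem y (by simp)
  rcases lt_or_gt_of_ne hxy with h | h
  · exact ⟨x, y, h, hx.1, hy.2, hy.1, hx.2, hne⟩
  · exact ⟨y, x, h, hy.1, hx.2, hx.1, hy.2, by rwa [Finset.pair_comm]⟩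

lemma max_witness {n : ℕ} {sgn : Finset (Fin n) → Bool} {A B u : Fin n} {σ : Bool}
    (hBu : (u : ℕ) = (B : ℕ) + 1)
    (H : ¬ IntervalHomog 1 sgn A u)
    (P : ∀ x y : Fin n, x ≠ y → A ≤ x → x ≤ B → A ≤ y → y ≤ B → sgn {x, y} = σ) :
    ∃ x : Fin n, A ≤ x ∧ x ≤ B ∧ sgn {x, u} ≠ σ := by
  obtain ⟨x, y, hxy, hAx, hyu, hAy, hxu, hne⟩ := non_homog_get H σ
  by_cases hyB : y ≤ B
  · exact absurd (P x y (ne_of_lt hxy) hAx (le_trans (le_of_lt hxy) hyB) hAy hyB) hne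
  · have hy : y = u := by
      apply Fin.ext
      have h1 : (y : ℕ) ≤ (u : ℕ) := Fin.le_def.mp hyu
      have h2 : (B : ℕ) < (y : ℕ) := Fin.lt_def.mp (not_le.mp hyB)
      omega
    subst hy
    have hxB : x ≤ B := Fin.le_def.mpr (by have := Fin.lt_def.mp hxy; omega)
    exact ⟨x, hAx, hxB, hne⟩

set_option maxHeartbeats 1000000 in
/-- The greedy partition of every flip `1`-sequence has at most `3` blocks. -/
theorem flip_one_sequence_three_blocks :
    ∀ (n m : ℕ) (sgn : Finset (Fin n) → Bool) (c : Fin (m + 1) → Fin n),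
      FlipSeq 1 sgn → IsGreedyPartition 1 sgn m c → m ≤ 3 := by
  intro n m sgn c F hgp
  obtain ⟨h0, hlast, hmono, hhom, hmax⟩ := hgp
  by_contra hmle
  push_neg at hmle
  have hm4 : 4 ≤ m := hmle
  clear h0 hlast
  have scomm : ∀ x y : Fin n, sgn {x, y} = sgn {y, x} := fun x y => by
    rw [Finset.pair_comm]
  set t0 := c ⟨0, by omega⟩ with ht0
  set t1 := c ⟨1, by omega⟩ with ht1
  set t2 := c ⟨2, by omega⟩ with ht2
  set t3 := c ⟨3, by omega⟩ with ht3
  set t4 := c ⟨4, by omega⟩ with ht4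
  have V01 : (t0 : ℕ) < (t1 : ℕ) :=
    hmono (show (⟨0, by omega⟩ : Fin (m+1)) < ⟨1, by omega⟩ from Fin.mk_lt_mk.mpr (by omega))
  have V12 : (t1 : ℕ) < (t2 : ℕ) :=
    hmono (show (⟨1, by omega⟩ : Fin (m+1)) < ⟨2, by omega⟩ from Fin.mk_lt_mk.mpr (by omega))
  have V23 : (t2 : ℕ) < (t3 : ℕ) :=
    hmono (show (⟨2, by omega⟩ : Fin (m+1)) < ⟨3, by omega⟩ from Fin.mk_lt_mk.mpr (by omega))
  have V34 : (t3 : ℕ) < (t4 : ℕ) :=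
    hmono (show (⟨3, by omega⟩ : Fin (m+1)) < ⟨4, by omega⟩ from Fin.mk_lt_mk.mpr (by omega))
  have hn4 : (t4 : ℕ) < n := t4.isLt
  obtain ⟨u1, hU1⟩ : ∃ u : Fin n, (u : ℕ) = (t1 : ℕ) + 1 := ⟨⟨(t1 : ℕ) + 1, by omega⟩, rfl⟩
  obtain ⟨u2, hU2⟩ : ∃ u : Fin n, (u : ℕ) = (t2 : ℕ) + 1 := ⟨⟨(t2 : ℕ) + 1, by omega⟩, rfl⟩
  obtain ⟨u3, hU3⟩ : ∃ u : Fin n, (u : ℕ) = (t3 : ℕ) + 1 := ⟨⟨(t3 : ℕ) + 1, by omega⟩, rfl⟩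
  have FLT : ∀ {a b : Fin n}, (a : ℕ) < (b : ℕ) → a < b := fun {a b} h => Fin.lt_def.mpr h
  have FLE : ∀ {a b : Fin n}, (a : ℕ) ≤ (b : ℕ) → a ≤ b := fun {a b} h => Fin.le_def.mpr h
  have FNE : ∀ {a b : Fin n}, (a : ℕ) < (b : ℕ) → a ≠ b := fun {a b} h =>
    ne_of_lt (Fin.lt_def.mpr h)
  have FNE' : ∀ {a b : Fin n}, (b : ℕ) < (a : ℕ) → a ≠ b := fun {a b} h =>
    (ne_of_lt (Fin.lt_def.mpr h)).symm
  have FEQ : ∀ {a b : Fin n}, (a : ℕ) = (b : ℕ) → a = b := fun {a b} h => Fin.ext h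
  -- block signs
  obtain ⟨σ1, P1'⟩ := homog_get (hhom ⟨0, by omega⟩)
  have P1 : ∀ x y : Fin n, x ≠ y → t0 ≤ x → x ≤ t1 → t0 ≤ y → y ≤ t1 → sgn {x, y} = σ1 := P1'
  obtain ⟨σ2, P2'⟩ := homog_get (hhom ⟨1, by omega⟩)
  have P2 : ∀ x y : Fin n, x ≠ y → t1 ≤ x → x ≤ t2 → t1 ≤ y → y ≤ t2 → sgn {x, y} = σ2 := P2'
  obtain ⟨σ3, P3'⟩ := homog_get (hhom ⟨2, by omega⟩)
  have P3 : ∀ x y : Fin n, x ≠ y → t2 ≤ x → x ≤ t3 → t2 ≤ y → y ≤ t3 → sgn {x, y} = σ3 := P3'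
  obtain ⟨σ4, P4'⟩ := homog_get (hhom ⟨3, by omega⟩)
  have P4 : ∀ x y : Fin n, x ≠ y → t3 ≤ x → x ≤ t4 → t3 ≤ y → y ≤ t4 → sgn {x, y} = σ4 := P4'
  -- maximality witnesses
  have nh1 : ¬ IntervalHomog 1 sgn t0 u1 :=
    hmax ⟨0, by omega⟩ u1 (show t1 < u1 from FLT (by omega))
  have nh2 : ¬ IntervalHomog 1 sgn t1 u2 :=
    hmax ⟨1, by omega⟩ u2 (show t2 < u2 from FLT (by omega))
  have nh3 : ¬ IntervalHomog 1 sgn t2 u3 :=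
    hmax ⟨2, by omega⟩ u3 (show t3 < u3 from FLT (by omega))
  obtain ⟨x1, hx1A, hx1B, N1⟩ := max_witness hU1 nh1 P1
  obtain ⟨x2, hx2A, hx2B, N2⟩ := max_witness hU2 nh2 P2
  obtain ⟨x3, hx3A, hx3B, N3⟩ := max_witness hU3 nh3 P3
  have Vx1A : (t0 : ℕ) ≤ (x1 : ℕ) := Fin.le_def.mp hx1A
  have Vx1B : (x1 : ℕ) ≤ (t1 : ℕ) := Fin.le_def.mp hx1B
  have Vx2A : (t1 : ℕ) ≤ (x2 : ℕ) := Fin.le_def.mp hx2A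
  have Vx2B : (x2 : ℕ) ≤ (t2 : ℕ) := Fin.le_def.mp hx2B
  have Vx3A : (t2 : ℕ) ≤ (x3 : ℕ) := Fin.le_def.mp hx3A
  have Vx3B : (x3 : ℕ) ≤ (t3 : ℕ) := Fin.le_def.mp hx3B
  by_cases hσ23 : σ2 = σ3
  · -- Case I : σ2 = σ3
    have A2 : sgn {t2, u2} = σ3 :=
      P3 t2 u2 (FNE (by omega)) (le_refl t2) (FLE (by omega)) (FLE (by omega)) (FLE (by omega))
    have hx2lt : (x2 : ℕ) < (t2 : ℕ) := by
      rcases lt_or_eq_of_le Vx2B with h | h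
      · exact h
      · exfalso; apply N2; rw [FEQ h, A2, ← hσ23]
    have B2x : sgn {t2, x2} = σ2 := by
      rw [scomm]
      exact P2 x2 t2 (FNE hx2lt) hx2A hx2B (FLE (by omega)) (le_refl t2)
    have N2' : sgn {u2, x2} ≠ σ2 := by rw [scomm]; exact N2
    have h1x2 : sgn {t2, x2} ≠ sgn {u2, x2} := by
      rw [B2x]; exact fun h => N2' h.symm
    have Ia : ∀ i : Fin n, (i : ℕ) < (t2 : ℕ) → i ≠ x2 → sgn {i, x2} = σ2 := fun i hi hix =>
      (flipL F (FLT hi) (FLT (show (t2:ℕ) < (u2:ℕ) by omega)) hix (FNE' hx2lt)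
        (FNE' (by omega)) h1x2).trans B2x
    have Ib : ∀ l : Fin n, (u2 : ℕ) < (l : ℕ) → sgn {l, x2} = sgn {u2, x2} := fun l hl =>
      flipR F (FLT (show (t2:ℕ) < (u2:ℕ) by omega)) (FLT hl) (FNE' hx2lt) (FNE' (by omega))
        (FNE' (by omega)) h1x2
    have C : sgn {t3, x2} ≠ σ2 := by
      rcases eq_or_lt_of_le (show (u2 : ℕ) ≤ (t3 : ℕ) by omega) with h | h
      · rw [← FEQ h]; exact N2'
      · rw [Ib t3 h]; exact N2'
    have C' : sgn {x2, t3} ≠ σ2 := by rw [scomm]; exact C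
    have E : sgn {t2, t3} = σ2 := by
      rw [hσ23]
      exact P3 t2 t3 (FNE (by omega)) (le_refl t2) (FLE (by omega)) (FLE (by omega)) (le_refl t3)
    have h1t3 : sgn {x2, t3} ≠ sgn {t2, t3} := by rw [E]; exact C'
    have D : ∀ l : Fin n, (t3 : ℕ) < (l : ℕ) → sgn {l, t3} = σ2 := fun l hl =>
      (flipR F (FLT hx2lt) (FLT (show (t2:ℕ) < (l:ℕ) by omega)) (FNE (by omega))
        (FNE (by omega)) (FNE' hl) h1t3).trans E
    have W : sgn {t3, u3} = σ2 := by rw [scomm]; exact D u3 (by omega)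
    have hx3lt : (x3 : ℕ) < (t3 : ℕ) := by
      rcases lt_or_eq_of_le Vx3B with h | h
      · exact h
      · exfalso; apply N3; rw [FEQ h, W, ← hσ23]
    have NX3 : sgn {x3, u3} ≠ σ2 := by rw [hσ23]; exact N3
    have h1u3 : sgn {x3, u3} ≠ sgn {t3, u3} := by rw [W]; exact NX3
    have G : ∀ i : Fin n, (i : ℕ) < (x3 : ℕ) → sgn {i, u3} = sgn {x3, u3} := fun i hi =>
      flipL F (FLT hi) (FLT hx3lt) (FNE (by omega)) (FNE (by omega)) (FNE (by omega)) h1u3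
    by_cases hσ12 : σ1 = σ2
    · -- Case I.a
      have A1 : sgn {t1, u1} = σ2 :=
        P2 t1 u1 (FNE (by omega)) (le_refl t1) (FLE (by omega)) (FLE (by omega)) (FLE (by omega))
      have hx1lt : (x1 : ℕ) < (t1 : ℕ) := by
        rcases lt_or_eq_of_le Vx1B with h | h
        · exact h
        · exfalso; apply N1; rw [FEQ h, A1, hσ12]
      have h1u1 : sgn {x1, u1} ≠ sgn {t1, u1} := by rw [A1, ← hσ12]; exact N1
      have K : ∀ l : Fin n, (t1 : ℕ) < (l : ℕ) → l ≠ u1 → sgn {l, u1} = σ2 := fun l hl hlu =>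
        (flipR F (FLT hx1lt) (FLT hl) (FNE (by omega)) (FNE (by omega)) hlu h1u1).trans A1
      have K3 : sgn {u3, u1} = σ2 := K u3 (by omega) (FNE' (by omega))
      rcases lt_or_eq_of_le (show (u1 : ℕ) ≤ (x3 : ℕ) by omega) with h | h
      · apply NX3
        rw [← G u1 h, scomm, K3]
      · apply NX3
        rw [← FEQ h, scomm, K3]
    · -- Case I.b
      have E1 : sgn {t0, t1} = σ1 :=
        P1 t0 t1 (FNE (by omega)) (le_refl t0) (FLE (by omega)) (FLE (by omega)) (le_refl t1)
      rcases lt_or_eq_of_le (show (t1 : ℕ) ≤ (x2 : ℕ) from Vx2A) with h | h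
      · have F0 : sgn {t0, x2} = σ2 := Ia t0 (by omega) (FNE (by omega))
        have h1t0 : sgn {t1, t0} ≠ sgn {x2, t0} := by
          rw [scomm t1 t0, E1, scomm x2 t0, F0]; exact hσ12
        have hQ : sgn {u3, t0} = sgn {x2, t0} :=
          flipR F (FLT h) (FLT (show (x2:ℕ) < (u3:ℕ) by omega)) (FNE' (by omega))
            (FNE' (by omega)) (FNE' (by omega)) h1t0
        apply NX3
        rw [← G t0 (by omega), scomm, hQ, scomm, F0]
      · have F0 : sgn {t0, x2} = σ2 := Ia t0 (by omega) (FNE (by omega))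
        apply hσ12
        rw [← E1, FEQ h, F0]
  · -- Case II : σ2 ≠ σ3
    have E3 : sgn {t2, u2} = σ3 :=
      P3 t2 u2 (FNE (by omega)) (le_refl t2) (FLE (by omega)) (FLE (by omega)) (FLE (by omega))
    have E2 : sgn {t1, t2} = σ2 :=
      P2 t1 t2 (FNE (by omega)) (le_refl t1) (FLE (by omega)) (FLE (by omega)) (le_refl t2)
    have h1t2 : sgn {t1, t2} ≠ sgn {u2, t2} := by
      rw [E2, scomm, E3]; exact hσ23
    have T : ∀ l : Fin n, (u2 : ℕ) < (l : ℕ) → sgn {l, t2} = σ3 := fun l hl => by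
      have hT := flipR F (FLT (show (t1:ℕ) < (u2:ℕ) by omega)) (FLT hl) (FNE (by omega))
        (FNE' (by omega)) (FNE' (by omega)) h1t2
      rw [hT, scomm, E3]
    have A1 : sgn {t1, u1} = σ2 :=
      P2 t1 u1 (FNE (by omega)) (le_refl t1) (FLE (by omega)) (FLE (by omega)) (FLE (by omega))
    have E4 : sgn {t3, u3} = σ4 :=
      P4 t3 u3 (FNE (by omega)) (le_refl t3) (FLE (by omega)) (FLE (by omega)) (FLE (by omega))
    have E23 : sgn {t2, t3} = σ3 :=
      P3 t2 t3 (FNE (by omega)) (le_refl t2) (FLE (by omega)) (FLE (by omega)) (le_refl t3)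
    have W : sgn {t3, u3} = σ3 := by
      by_cases hσ12 : σ1 = σ2
      · have hx1lt : (x1 : ℕ) < (t1 : ℕ) := by
          rcases lt_or_eq_of_le Vx1B with h | h
          · exact h
          · exfalso; apply N1; rw [FEQ h, A1, hσ12]
        have h1u1 : sgn {x1, u1} ≠ sgn {t1, u1} := by rw [A1, ← hσ12]; exact N1
        have K : ∀ l : Fin n, (t1 : ℕ) < (l : ℕ) → l ≠ u1 → sgn {l, u1} = σ2 := fun l hl hlu =>
          (flipR F (FLT hx1lt) (FLT hl) (FNE (by omega)) (FNE (by omega)) hlu h1u1).trans A1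
        have Kt3 : sgn {t3, u1} = σ2 := K t3 (by omega) (FNE' (by omega))
        rcases lt_or_eq_of_le (show (u1 : ℕ) ≤ (t2 : ℕ) by omega) with h | h
        · have h1t3 : sgn {u1, t3} ≠ sgn {t2, t3} := by
            rw [scomm u1 t3, Kt3, E23]; exact hσ23
          have hR := flipR F (FLT h) (FLT (show (t2:ℕ) < (u3:ℕ) by omega)) (FNE (by omega))
            (FNE (by omega)) (FNE' (by omega)) h1t3
          rw [scomm, hR, E23]
        · exfalso
          apply hσ23
          rw [← Kt3, FEQ h, scomm, E23]
      · by_cases hσ34 : σ4 = σ3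
        · rw [E4, hσ34]
        · exfalso
          have h1' : sgn {t2, t3} ≠ sgn {u3, t3} := by
            rw [E23, scomm, E4]; exact fun hh => hσ34 hh.symm
          have L1 : sgn {t1, t3} = σ3 :=
            (flipL F (FLT (show (t1:ℕ) < (t2:ℕ) by omega))
              (FLT (show (t2:ℕ) < (u3:ℕ) by omega)) (FNE (by omega)) (FNE (by omega))
              (FNE' (by omega)) h1').trans E23
          have E01 : sgn {t0, t1} = σ1 :=
            P1 t0 t1 (FNE (by omega)) (le_refl t0) (FLE (by omega)) (FLE (by omega)) (le_refl t1)
          have A1' : sgn {u1, t1} = σ2 := by rw [scomm]; exact A1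
          have h1'' : sgn {t0, t1} ≠ sgn {u1, t1} := by
            rw [E01, A1']; exact hσ12
          have L2 : sgn {t3, t1} = σ2 :=
            (flipR F (FLT (show (t0:ℕ) < (u1:ℕ) by omega))
              (FLT (show (u1:ℕ) < (t3:ℕ) by omega)) (FNE (by omega)) (FNE' (by omega))
              (FNE' (by omega)) h1'').trans A1'
          apply hσ23
          rw [← L2, scomm, L1]
    have hx3lt : (x3 : ℕ) < (t3 : ℕ) := by
      rcases lt_or_eq_of_le Vx3B with h | h
      · exact h
      · exfalso; apply N3; rw [FEQ h, W]
    have Tu3 : sgn {u3, t2} = σ3 := T u3 (by omega)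
    rcases lt_or_eq_of_le (show (t2 : ℕ) ≤ (x3 : ℕ) from Vx3A) with h | h
    · have h1f : sgn {x3, u3} ≠ sgn {t3, u3} := by rw [W]; exact N3
      have hL := flipL F (FLT h) (FLT hx3lt) (FNE (by omega)) (FNE (by omega))
        (FNE (by omega)) h1f
      apply N3
      rw [← hL, scomm, Tu3]
    · apply N3
      rw [← FEQ h, scomm, Tu3]
end

section
/- Let γ: I → R^d be a (d+1)-crossing curve. Then for every ε > 0 there exists an ε-sample T of I such that the vertex sequence (γ(t_1),…,γ(t_n)) of the polygonal path π(γ, T) is in general position. -/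
open Set

lemma exists_hyperplane_of_card_le {d : ℕ} (S : Finset (Fin d → ℝ)) (hne : S.Nonempty)
    (hcard : S.card ≤ d) :
    ∃ (u : Fin d → ℝ) (c : ℝ), u ≠ 0 ∧
      ∀ x ∈ affineSpan ℝ (S : Set (Fin d → ℝ)), ∑ i, u i * x i = c := by
  classical
  set L : (Fin d → ℝ) → (Fin (d + 1) → ℝ) := fun q => Fin.cons 1 q with hLdef
  set V : Submodule ℝ (Fin (d + 1) → ℝ) :=
    Submodule.span ℝ ((S.image L : Finset _) : Set _) with hVdef
  have hVlt : V < ⊤ := by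
    rw [lt_top_iff_ne_top]
    intro htop
    have h1 : Module.finrank ℝ V ≤ (S.image L).card := finrank_span_finset_le_card _
    have h2 : (S.image L).card ≤ S.card := Finset.card_image_le
    have h3 : Module.finrank ℝ V = d + 1 := by
      rw [htop, finrank_top, Module.finrank_pi]
      simp
    omega
  obtain ⟨φ, hφ0, hker⟩ := V.exists_le_ker_of_lt_top hVlt
  have hφ : ∀ y : Fin (d + 1) → ℝ,
      φ y = ∑ j, y j * φ (fun j' => if j = j' then 1 else 0) := fun y => by
    simpa [smul_eq_mul] using LinearMap.pi_apply_eq_sum_univ φ y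
  set bfn : Fin (d + 1) → ℝ := fun j => φ (fun j' => if j = j' then 1 else 0) with hbdef
  have hexp : ∀ y : Fin (d + 1) → ℝ,
      φ y = y 0 * bfn 0 + ∑ i : Fin d, y i.succ * bfn i.succ := by
    intro y
    rw [hφ y, Fin.sum_univ_succ]
  have hmemV : ∀ q ∈ S, L q ∈ V := fun q hq =>
    Submodule.subset_span (by simp only [Finset.coe_image, Set.mem_image]; exact ⟨q, hq, rfl⟩)
  have hLexp : ∀ z : Fin d → ℝ, L z ∈ V → bfn 0 + ∑ i, z i * bfn i.succ = 0 := by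
    intro z hz
    have h0 : φ (L z) = 0 := hker hz
    rw [hexp] at h0
    simpa [hLdef] using h0
  refine ⟨fun i => bfn i.succ, -(bfn 0), ?_, ?_⟩
  · intro hu
    obtain ⟨q, hq⟩ := hne
    have h1 := hLexp q (hmemV q hq)
    have hsucc : ∀ i : Fin d, bfn i.succ = 0 := fun i => congrFun hu i
    have h0 : bfn 0 = 0 := by
      have : (∑ i, q i * bfn i.succ) = 0 := by
        apply Finset.sum_eq_zero; intro i _; rw [hsucc i, mul_zero]
      linarith [h1]
    apply hφ0
    apply LinearMap.ext
    intro y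
    rw [hφ y]
    simp only [LinearMap.zero_apply]
    apply Finset.sum_eq_zero
    intro j _
    have : bfn j = 0 := by
      rcases Fin.eq_zero_or_eq_succ j with h | ⟨i, rfl⟩
      · rw [h]; exact h0
      · exact hsucc i
    show y j * bfn j = 0
    rw [this, mul_zero]
  · intro x hx
    have hx' : x ∈ affineSpan ℝ (Set.range ((↑) : ↥S → (Fin d → ℝ))) := by
      rwa [Subtype.range_coe]
    obtain ⟨s, w, hw, hxe⟩ := eq_affineCombination_of_mem_affineSpan hx'
    rw [Finset.affineCombination_eq_linear_combination _ _ _ hw] at hxe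
    have hLx : L x ∈ V := by
      have hLsum : L x = ∑ j ∈ s, w j • L ((j : ↥S) : Fin d → ℝ) := by
        funext k
        rw [Finset.sum_apply]
        refine Fin.cases ?_ ?_ k
        · simp only [hLdef, Fin.cons_zero, Pi.smul_apply, smul_eq_mul]
          simpa using hw.symm
        · intro i
          simp only [hLdef, Fin.cons_succ, Pi.smul_apply, smul_eq_mul]
          rw [hxe, Finset.sum_apply]
          simp
      rw [hLsum]
      exact Submodule.sum_smul_mem V w (fun j _ => hmemV _ (j : ↥S).2)
    have h1 := hLexp x hLx
    have : ∑ i, bfn i.succ * x i = ∑ i, x i * bfn i.succ :=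
      Finset.sum_congr rfl (fun i _ => mul_comm _ _)
    rw [this]
    linarith [h1]

lemma finite_bad {d : ℕ} {a b : ℝ} {γ : ℝ → (Fin d → ℝ)}
    (hγ : CurveCrossing (d + 1) (Set.Icc a b) γ)
    (S : Finset (Fin d → ℝ)) (hne : S.Nonempty) (hcard : S.card ≤ d) :
    {t : ℝ | t ∈ Set.Icc a b ∧ γ t ∈ affineSpan ℝ (S : Set (Fin d → ℝ))}.Finite := by
  obtain ⟨u, c, hu, hsub⟩ := exists_hyperplane_of_card_le S hne hcard
  have h1 := hγ {x | ∑ i, u i * x i = c} ⟨u, c, hu, rfl⟩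
  have h2 : {t : ℝ | t ∈ Set.Icc a b ∧ γ t ∈ affineSpan ℝ (S : Set (Fin d → ℝ))} ⊆
      {t | t ∈ Set.Icc a b ∧ γ t ∈ {x | ∑ i, u i * x i = c}} :=
    fun t ht => ⟨ht.1, hsub _ ht.2⟩
  rw [← Set.encard_lt_top_iff]
  exact lt_of_le_of_lt ((Set.encard_mono h2).trans h1) (by exact_mod_cast WithTop.coe_lt_top _)

lemma step_affineIndependent {d : ℕ} (q : ℕ → (Fin d → ℝ)) (m : ℕ)
    (IH : ∀ s : Finset ℕ, (∀ j ∈ s, j < m) → s.card ≤ d + 1 →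
      AffineIndependent ℝ (fun j : s => q j))
    (hnew : ∀ s : Finset ℕ, (∀ j ∈ s, j < m) → s.Nonempty → s.card ≤ d →
      q m ∉ affineSpan ℝ (q '' (s : Set ℕ)))
    (s : Finset ℕ) (hs : ∀ j ∈ s, j < m + 1) (hcard : s.card ≤ d + 1) :
    AffineIndependent ℝ (fun j : s => q j) := by
  classical
  by_cases hm : m ∈ s
  · set i : ↥s := ⟨m, hm⟩ with hidef
    apply AffineIndependent.affineIndependent_of_notMem_span (i := i)
    · -- subfamily
      have herase : ∀ j ∈ s.erase m, j < m := fun j hj => by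
        have := Finset.mem_erase.1 hj
        have := hs j this.2
        omega
      have hind := IH (s.erase m) herase (le_trans (Finset.card_le_card (Finset.erase_subset _ _)) hcard)
      let f : {y : ↥s // y ≠ i} ↪ ↥(s.erase m) :=
        ⟨fun x => ⟨(x : ↥s), Finset.mem_erase.2 ⟨fun h => x.2 (Subtype.ext h), (x : ↥s).2⟩⟩,
          fun x y hxy => Subtype.ext (Subtype.ext (congrArg (fun z => ((z : ↥(s.erase m)) : ℕ)) hxy))⟩
      show AffineIndependent ℝ ((fun j : ↥(s.erase m) => q j) ∘ f)
      exact hind.comp_embedding f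
    · have himg : (fun j : ↥s => q j) '' {x | x ≠ i} = q '' ((s.erase m : Finset ℕ) : Set ℕ) := by
        ext y
        constructor
        · rintro ⟨x, hx, rfl⟩
          exact ⟨(x : ↥s), Finset.mem_erase.2 ⟨fun h => hx (Subtype.ext h), (x : ↥s).2⟩, rfl⟩
        · rintro ⟨j, hj, rfl⟩
          have hj' := Finset.mem_erase.1 hj
          exact ⟨⟨j, hj'.2⟩, fun h => hj'.1 (congrArg Subtype.val h), rfl⟩
      rw [himg]
      rcases Finset.eq_empty_or_nonempty (s.erase m) with he | hne
      · rw [he]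
        rw [Finset.coe_empty, Set.image_empty, AffineSubspace.span_empty]
        exact AffineSubspace.notMem_bot ℝ _ _
      · have hcard' : (s.erase m).card ≤ d := by
          have := Finset.card_erase_of_mem hm
          omega
        have herase : ∀ j ∈ s.erase m, j < m := fun j hj => by
          have h1 := Finset.mem_erase.1 hj
          have := hs j h1.2
          omega
        exact hnew (s.erase m) herase hne hcard'
  · exact IH s (fun j hj => by have := hs j hj; have : j ≠ m := fun h => hm (h ▸ hj); omega) hcard

lemma exists_good_seq {d : ℕ} {a b : ℝ} {γ : ℝ → (Fin d → ℝ)}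
    (hγ : CurveCrossing (d + 1) (Set.Icc a b) γ)
    {δ : ℝ} (hδ : 0 < δ) (N : ℕ)
    (hsub : ∀ i : ℕ, i < N → Set.Ioo (a + i * δ) (a + (i + 1) * δ) ⊆ Set.Icc a b) :
    ∀ m, m ≤ N → ∃ t : ℕ → ℝ,
      (∀ i, i < m → t i ∈ Set.Ioo (a + i * δ) (a + (i + 1) * δ)) ∧
      (∀ s : Finset ℕ, (∀ j ∈ s, j < m) → s.card ≤ d + 1 →
        AffineIndependent ℝ (fun j : s => γ (t j))) := by
  classical
  intro m
  induction m with
  | zero =>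
    intro _
    refine ⟨fun _ => 0, fun i hi => absurd hi (Nat.not_lt_zero i), fun s hs _ => ?_⟩
    have hse : s = ∅ := Finset.eq_empty_of_forall_notMem fun j hj => Nat.not_lt_zero j (hs j hj)
    subst hse
    exact affineIndependent_of_subsingleton ℝ _
  | succ m ih =>
    intro hm
    obtain ⟨t, ht1, ht2⟩ := ih (Nat.le_of_succ_le hm)
    set F : Finset (Finset ℕ) :=
      (Finset.range m).powerset.filter (fun s => s.Nonempty ∧ s.card ≤ d) with hF
    set B : Set ℝ := ⋃ s ∈ F,
      {x : ℝ | x ∈ Set.Icc a b ∧ γ x ∈ affineSpan ℝ ((fun j => γ (t j)) '' (s : Set ℕ))} with hB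
    have hBfin : B.Finite := by
      refine Set.Finite.biUnion F.finite_toSet fun s hs => ?_
      have hs' := Finset.mem_filter.1 hs
      have h1 : ((s.image fun j => γ (t j) : Finset (Fin d → ℝ)) : Set (Fin d → ℝ)) =
          (fun j => γ (t j)) '' (s : Set ℕ) := Finset.coe_image
      rw [← h1]
      exact finite_bad hγ _ (hs'.2.1.image _) (le_trans Finset.card_image_le hs'.2.2)
    have hlt : a + m * δ < a + (m + 1) * δ := by nlinarith
    have hinf : (Set.Ioo (a + m * δ) (a + (m + 1) * δ)).Infinite := Set.infinite_coe_iff.1 (Set.Ioo.infinite hlt)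
    obtain ⟨x, hxI, hxB⟩ := (hinf.diff hBfin).nonempty
    refine ⟨Function.update t m x, ?_, ?_⟩
    · intro i hi
      rcases Nat.lt_succ_iff_lt_or_eq.1 hi with h | rfl
      · rw [Function.update_of_ne (Nat.ne_of_lt h)]
        exact ht1 i h
      · rw [Function.update_self]
        exact hxI
    · intro s hs hcard
      refine step_affineIndependent (fun j => γ (Function.update t m x j)) m ?_ ?_ s hs hcard
      · intro s' hs' hcard'
        have he : (fun j : s' => γ (Function.update t m x j)) = fun j : s' => γ (t j) :=
          funext fun j => by rw [Function.update_of_ne (Nat.ne_of_lt (hs' j j.2))]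
        rw [he]
        exact ht2 s' hs' hcard'
      · intro s' hs' hne' hcard'
        show γ (Function.update t m x m) ∉
          affineSpan ℝ ((fun j => γ (Function.update t m x j)) '' (s' : Set ℕ))
        rw [Function.update_self]
        have he : (fun j => γ (Function.update t m x j)) '' (s' : Set ℕ) =
            (fun j => γ (t j)) '' (s' : Set ℕ) := by
          apply Set.image_congr
          intro j hj
          rw [Function.update_of_ne (Nat.ne_of_lt (hs' j hj))]
        rw [he]
        intro hmem
        apply hxB
        rw [hB]
        have hsF : s' ∈ F := by
          rw [hF]
          exact Finset.mem_filter.2 ⟨Finset.mem_powerset.2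
            (fun j hj => Finset.mem_range.2 (hs' j hj)), hne', hcard'⟩
        exact Set.mem_biUnion hsF ⟨hsub m (Nat.lt_of_succ_le hm) hxI, hmem⟩

/-- For every `(d+1)`-crossing curve `γ : [a, b] → ℝ^d` and every `ε > 0`
there exists an `ε`-sample `t` such that the vertex sequence `(γ (t 0), …, γ (t (n-1)))`
of the corresponding polygonal path is in general position. -/
theorem exists_general_position_sample :
    ∀ (d : ℕ) (a b : ℝ), a ≤ b → ∀ γ : ℝ → (Fin d → ℝ), ContinuousOn γ (Set.Icc a b) →
      CurveCrossing (d + 1) (Set.Icc a b) γ →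
      ∀ ε : ℝ, 0 < ε → ∃ (n : ℕ) (t : Fin n → ℝ), IsEpsSample a b ε t ∧
        GeneralPosition (fun i => γ (t i)) := by
  classical
  intro d a b hab γ _hcont hγ ε hε
  by_cases hba : b - a < ε
  · -- trivial case: empty sample
    refine ⟨0, Fin.elim0, ⟨fun i => i.elim0, fun i => i.elim0, ?_⟩, ?_⟩
    · intro x hx
      exfalso
      have h1 : x ∈ Set.Icc a b := hx ⟨le_refl x, by linarith⟩
      have h2 : x + ε ∈ Set.Icc a b := hx ⟨by linarith, le_refl _⟩
      have := h1.1
      have := h2.2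
      linarith
    · intro s _
      have : Subsingleton ↥s := ⟨fun i j => Subtype.ext (Subsingleton.elim _ _)⟩
      exact affineIndependent_of_subsingleton ℝ _
  · push_neg at hba
    set N : ℕ := max 1 ⌈2 * (b - a) / ε⌉₊ with hN
    have hN1 : 1 ≤ N := le_max_left _ _
    have hN0 : (0 : ℝ) < N := by positivity
    set δ : ℝ := (b - a) / N with hδdef
    have hba0 : 0 < b - a := lt_of_lt_of_le hε hba
    have hδ : 0 < δ := div_pos hba0 hN0
    have hNδ : (N : ℝ) * δ = b - a := by
      rw [hδdef]; field_simp
    have h2δ : 2 * δ ≤ ε := by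
      have hceil : 2 * (b - a) / ε ≤ (N : ℝ) := le_trans (Nat.le_ceil _)
        (by exact_mod_cast Nat.cast_le.2 (le_max_right 1 _))
      rw [div_le_iff₀ hε] at hceil
      rw [hδdef, mul_div_assoc', div_le_iff₀ hN0]
      linarith
    have hδε : δ ≤ ε := by linarith
    have hsub : ∀ i : ℕ, i < N → Set.Ioo (a + i * δ) (a + (i + 1) * δ) ⊆ Set.Icc a b := by
      intro i hi y hy
      constructor
      · have : (0:ℝ) ≤ i * δ := by positivity
        have := hy.1
        linarith
      · have hi1 : ((i : ℝ) + 1) ≤ N := by exact_mod_cast Nat.succ_le_of_lt hi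
        have : ((i : ℝ) + 1) * δ ≤ N * δ := by nlinarith
        have := hy.2
        linarith [hNδ]
    obtain ⟨t, ht1, ht2⟩ := exists_good_seq hγ hδ N hsub N le_rfl
    refine ⟨N, fun i => t i, ⟨?_, ?_, ?_⟩, ?_⟩
    · intro i j hij
      have hij' : (i : ℕ) < (j : ℕ) := hij
      have h1 : t i < a + ((i : ℕ) + 1) * δ := (ht1 i i.2).2
      have h2 : a + (j : ℕ) * δ < t j := (ht1 j j.2).1
      have h3 : ((i : ℕ) + 1 : ℝ) ≤ (j : ℕ) := by exact_mod_cast hij'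
      nlinarith
    · intro i
      exact hsub i i.2 (ht1 i i.2)
    · intro x hx
      have hax : a ≤ x := (hx ⟨le_refl x, by linarith⟩).1
      have hxb : x + ε ≤ b := (hx ⟨by linarith, le_refl _⟩).2
      have hPex : ∃ i : ℕ, i < N ∧ x ≤ t i := by
        refine ⟨N - 1, by omega, ?_⟩
        have h1 : a + ((N - 1 : ℕ) : ℝ) * δ < t (N - 1) := (ht1 (N - 1) (by omega)).1
        have hcast : ((N - 1 : ℕ) : ℝ) = (N : ℝ) - 1 := by
          have : (1 : ℕ) ≤ N := hN1
          push_cast [Nat.cast_sub this]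
          ring
        rw [hcast] at h1
        have : a + ((N : ℝ) - 1) * δ = b - δ := by nlinarith [hNδ]
        rw [this] at h1
        linarith
      set i₀ := Nat.find hPex with hi₀
      obtain ⟨hi₀N, hxt⟩ := Nat.find_spec hPex
      refine ⟨⟨i₀, hi₀N⟩, hxt, ?_⟩
      show t i₀ ≤ x + ε
      rcases Nat.eq_zero_or_eq_succ_pred i₀ with h0 | hsucc
      · have h1 : t i₀ < a + ((i₀ : ℝ) + 1) * δ := (ht1 i₀ hi₀N).2
        rw [h0] at h1 ⊢
        push_cast at h1
        have : t 0 < a + δ := by linarith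
        linarith
      · set k := i₀ - 1 with hk
        have hik : i₀ = k + 1 := hsucc
        have hklt : ¬ (k < N ∧ x ≤ t k) := Nat.find_min hPex (by omega)
        have hkN : k < N := by omega
        have htk : t k < x := by
          by_contra h
          push_neg at h
          exact hklt ⟨hkN, h⟩
        have h1 : t i₀ < a + ((i₀ : ℝ) + 1) * δ := (ht1 i₀ hi₀N).2
        have h2 : a + (k : ℝ) * δ < t k := (ht1 k hkN).1
        have hcast : (i₀ : ℝ) = (k : ℝ) + 1 := by rw [hik]; push_cast; ring
        rw [hcast] at h1
        nlinarith
    · intro s hcard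
      have hsval : ∀ j ∈ s.image (Fin.val : Fin N → ℕ), j < N := by
        intro j hj
        obtain ⟨i, _, rfl⟩ := Finset.mem_image.1 hj
        exact i.2
      have hcard' : (s.image (Fin.val : Fin N → ℕ)).card ≤ d + 1 := by
        rw [Finset.card_image_of_injective _ Fin.val_injective]
        exact hcard
      have hind := ht2 (s.image (Fin.val : Fin N → ℕ)) hsval hcard'
      let g : ↥s ↪ ↥(s.image (Fin.val : Fin N → ℕ)) :=
        ⟨fun i => ⟨(i : Fin N), Finset.mem_image.2 ⟨(i : Fin N), i.2, rfl⟩⟩,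
          fun i j hij => Subtype.ext (Fin.val_injective (congrArg Subtype.val hij))⟩
      show AffineIndependent ℝ ((fun j : ↥(s.image (Fin.val : Fin N → ℕ)) => γ (t j)) ∘ g)
      exact hind.comp_embedding g
end

section
/- Let P = (p_1,…,p_n) be an order-type homogeneous sequence of points in general position in R^d, let 1 ≤ i ≤ n−1, and let q be an interior point of the segment p_i p_{i+1}. Then the sequence P' = (p_1,…,p_i, q, p_{i+2},…,p_n), obtained by replacing p_{i+1} with q, is order-type homogeneous: all its increasing-index (d+1)-tuples have the same nonzero sign as those of P. -/
open Set

lemma sign_combo (a b X Y σ : ℝ) (ha : 0 < a) (hb : 0 < b) (hσ : σ ≠ 0)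
    (hX : Real.sign X = σ) (hY : Real.sign Y = σ) : Real.sign (a * X + b * Y) = σ := by
  have key : ∀ Z : ℝ, Real.sign Z = σ → (σ = 1 → 0 < Z) ∧ (σ = -1 → Z < 0) := by
    intro Z hZ
    rcases lt_trichotomy Z 0 with h | h | h
    · rw [Real.sign_of_neg h] at hZ
      constructor <;> intro hs <;> [ (rw [hs] at hZ; norm_num at hZ) ; exact h]
    · rw [h, Real.sign_zero] at hZ; exact (hσ hZ.symm).elim
    · rw [Real.sign_of_pos h] at hZ
      constructor <;> intro hs <;> [exact h ; (rw [hs] at hZ; norm_num at hZ)]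
  have hσ' : σ = 1 ∨ σ = -1 := by
    rcases lt_trichotomy X 0 with h | h | h
    · right; rw [← hX, Real.sign_of_neg h]
    · rw [← hX, h, Real.sign_zero] at hσ; simp at hσ
    · left; rw [← hX, Real.sign_of_pos h]
  rcases hσ' with hs | hs <;> rw [hs]
  · have h1 := (key X hX).1 hs; have h2 := (key Y hY).1 hs
    exact Real.sign_of_pos (by positivity)
  · have h1 := (key X hX).2 hs; have h2 := (key Y hY).2 hs
    exact Real.sign_of_neg (by nlinarith)

/-- If `P` is an order-type homogeneous sequence in general position in
`ℝ^d` (all increasing-index `(d+1)`-tuples of sign `σ ≠ 0`), and `q` is an interior point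
of the segment `p i p (i+1)`, then replacing `p (i+1)` by `q` again yields a sequence all
of whose increasing-index `(d+1)`-tuples have sign `σ`. -/
theorem replace_vertex_on_edge :
    ∀ (d n : ℕ) (p : Fin n → (Fin d → ℝ)) (σ : ℝ), GeneralPosition p → σ ≠ 0 →
      (∀ f : Fin (d + 1) → Fin n, StrictMono f → otSign (fun j => p (f j)) = σ) →
      ∀ (i : ℕ) (hi : i + 1 < n) (q : Fin d → ℝ),
        q ∈ openSegment ℝ (p ⟨i, Nat.lt_of_succ_lt hi⟩) (p ⟨i + 1, hi⟩) →
        ∀ f : Fin (d + 1) → Fin n, StrictMono f →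
          otSign (fun j => Function.update p ⟨i + 1, hi⟩ q (f j)) = σ := by
  intro d n p σ _hgp hσ hhom i hi q hq f hf
  set pi : Fin n := ⟨i, Nat.lt_of_succ_lt hi⟩ with hpi
  set pi1 : Fin n := ⟨i + 1, hi⟩ with hpi1
  obtain ⟨a, b, ha, hb, hab, hq⟩ := hq
  by_cases hj0 : ∃ j0, f j0 = pi1
  swap
  · push_neg at hj0
    have : (fun j => Function.update p pi1 q (f j)) = fun j => p (f j) := by
      funext j; exact Function.update_of_ne (hj0 j) _ _
    rw [this]; exact hhom f hf
  obtain ⟨j0, hj0⟩ := hj0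
  -- base matrix
  set A : Matrix (Fin (d+1)) (Fin (d+1)) ℝ :=
    Matrix.of (fun r j : Fin (d + 1) => (Fin.cons (1 : ℝ) (p (f j)) : Fin (d+1) → ℝ) r) with hA
  have hAdet : Real.sign A.det = σ := hhom f hf
  -- target matrix equals updateColumn
  have hB : (Matrix.of fun r j : Fin (d + 1) =>
      (Fin.cons (1 : ℝ) (Function.update p pi1 q (f j)) : Fin (d+1) → ℝ) r)
      = A.updateCol j0 (Fin.cons 1 q) := by
    ext r j
    by_cases h : j = j0
    · subst h
      rw [Matrix.of_apply, Matrix.updateCol_self, hj0, Function.update_self]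
    · have hne : f j ≠ pi1 := by rw [← hj0]; exact fun h' => h (hf.injective h')
      rw [Matrix.of_apply, Matrix.updateCol_ne h, Function.update_of_ne hne]; rfl
  -- decompose column
  have hcons : (Fin.cons (1:ℝ) q : Fin (d+1) → ℝ)
      = a • (Fin.cons 1 (p pi) : Fin (d+1) → ℝ) + b • (Fin.cons 1 (p pi1) : Fin (d+1) → ℝ) := by
    funext r
    refine Fin.cases ?_ ?_ r
    · simp [← hq]; linarith
    · intro r'; simp [← hq]
  have hdet : (A.updateCol j0 (Fin.cons 1 q)).det
      = a * (A.updateCol j0 (Fin.cons 1 (p pi))).det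
        + b * (A.updateCol j0 (Fin.cons 1 (p pi1))).det := by
    rw [hcons, Matrix.det_updateCol_add, Matrix.det_updateCol_smul,
      Matrix.det_updateCol_smul]
  have hY : (A.updateCol j0 (Fin.cons 1 (p pi1))).det = A.det := by
    have : (Fin.cons (1:ℝ) (p pi1) : Fin (d+1) → ℝ) = fun r => A r j0 := by
      funext r; simp [hA, hj0]
    rw [this, Matrix.updateCol_eq_self]
  -- the X part
  have hX : Real.sign (A.updateCol j0 (Fin.cons 1 (p pi))).det = σ ∨
      (A.updateCol j0 (Fin.cons 1 (p pi))).det = 0 := by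
    by_cases hji : ∃ j1, f j1 = pi
    · obtain ⟨j1, hj1⟩ := hji
      have hne : j1 ≠ j0 := by
        intro h; rw [h, hj0] at hj1
        exact absurd (Fin.val_eq_val _ _ |>.mpr hj1) (by simp [hpi1, hpi])
      right
      refine Matrix.det_zero_of_column_eq hne ?_
      intro r
      simp [Matrix.updateCol_apply, hne, hA, hj1]
    · left
      push_neg at hji
      set g : Fin (d+1) → Fin n := fun j => if j = j0 then pi else f j with hg
      have hgm : StrictMono g := by
        intro x y hxy
        have hfi : ∀ j, j ≠ j0 → ((f j : ℕ) ≠ i) := fun j hjne h =>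
          hji j (Fin.ext h)
        have hpilt : pi < pi1 :=
          show (⟨i, Nat.lt_of_succ_lt hi⟩ : Fin n) < ⟨i + 1, hi⟩ from
            Fin.mk_lt_mk.mpr (Nat.lt_succ_self i)
        by_cases hx : x = j0
        · have hy : y ≠ j0 := fun h => by rw [hx, ← h] at hxy; exact lt_irrefl _ hxy
          simp only [hg, if_pos hx, if_neg hy]
          have h1 : f x < f y := hf hxy
          rw [hx, hj0] at h1
          exact lt_trans hpilt h1
        · by_cases hy : y = j0
          · simp only [hg, if_neg hx, if_pos hy]
            have h1 : f x < f y := hf hxy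
            rw [hy, hj0] at h1
            have h3 : (f x : ℕ) < i + 1 := Fin.lt_def.mp h1
            have h2 := hfi x hx
            exact Fin.lt_def.mpr (show (f x : ℕ) < i by omega)
          · simp only [hg, if_neg hx, if_neg hy]; exact hf hxy
      have : A.updateCol j0 (Fin.cons 1 (p pi))
          = Matrix.of (fun r j : Fin (d + 1) =>
            (Fin.cons (1 : ℝ) (p (g j)) : Fin (d+1) → ℝ) r) := by
        ext r j
        by_cases h : j = j0 <;> simp [Matrix.updateCol_apply, h, hg, hA]
      rw [this]
      exact hhom g hgm
  show Real.sign _ = σ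
  rw [show (Matrix.of fun r j : Fin (d + 1) =>
      (Fin.cons (1 : ℝ) (Function.update p pi1 q (f j)) : Fin (d+1) → ℝ) r)
      = A.updateCol j0 (Fin.cons 1 q) from hB, hdet, hY]
  rcases hX with hX | hX
  · exact sign_combo a b _ _ σ ha hb hσ hX hAdet
  · rw [hX, mul_zero, zero_add]
    rcases lt_trichotomy A.det 0 with h | h | h
    · rw [Real.sign_of_neg h] at hAdet
      rw [Real.sign_of_neg (by nlinarith), hAdet]
    · rw [h, Real.sign_zero] at hAdet; exact (hσ hAdet.symm).elim
    · rw [Real.sign_of_pos h] at hAdet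
      rw [Real.sign_of_pos (by positivity), hAdet]
end

section
/- The curve γ: [−1, 1] → R² given by γ(t) = (t, t(1−t²)²) is 3-crossing, but [−1, 1] cannot be subdivided into fewer than 4 closed subintervals on each of which γ is convex (2-crossing); in particular, the constant M(2) in the subdivision theorem for 3-crossing planar curves satisfies M(2) ≥ 4. -/
open Set

/-! A line `y = m t + q` meets the curve where `t⁵ - 2t³ + B t = q` with `B = 1 - m`. Four such
roots in `[-1, 1]` give, by Rolle, three critical points in `(-1, 1)`, roots of the even quartic
`5t⁴ - 6t² + B`. Their squares take at most two values, which sum to `6/5`; this forces `B > 1`.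
But then `t⁵ - 2t³ + B t = t ((t² - 1)² + B - 1)` has the sign of `t`, so the four roots, and
hence the three critical points, all have the same sign, and their squares are three distinct
roots of `5s² - 6s + B`.

On each of `[-9/10, -3/5]`, `[-1/10, 1/10]` and `[3/5, 9/10]` the chord through the endpoints
crosses the curve once more in between, so each of these windows contains a cut point of the
subdivision in its interior; three interior cut points need at least four pieces. -/

theorem Set.exists_strictMono_of_le_encard {α : Type*} [LinearOrder α] {S : Set α} {n : ℕ}
    (h : (n : ℕ∞) ≤ S.encard) : ∃ g : Fin n → α, StrictMono g ∧ ∀ i, g i ∈ S := by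
  obtain ⟨T, hTS, hT⟩ := exists_subset_encard_eq h
  have hfin : T.Finite := finite_of_encard_eq_coe hT
  have hcard : hfin.toFinset.card = n := by
    rw [← ENat.natCast_inj, ← hfin.encard_eq_coe_toFinset_card, hT]
  exact ⟨hfin.toFinset.orderEmbOfFin hcard, (hfin.toFinset.orderEmbOfFin hcard).strictMono,
    fun i => hTS (hfin.mem_toFinset.1 (hfin.toFinset.orderEmbOfFin_mem hcard i))⟩

theorem Fin.exists_castSucc_lt_le_succ {α : Type*} [LinearOrder α] {k : ℕ}
    (t : Fin (k + 1) → α) {x : α} (h0 : t 0 < x) (hlast : x ≤ t (Fin.last k)) :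
    ∃ j : Fin k, t j.castSucc < x ∧ x ≤ t j.succ := by
  by_contra! h
  have : ∀ i, t i < x := Fin.induction h0 fun j hj => h j hj
  exact (this (Fin.last k)).not_ge hlast

theorem Fin.exists_mem_Ioo_of_forall_not_Icc_subset {α : Type*} [LinearOrder α]
    [DenselyOrdered α] {k : ℕ} (t : Fin (k + 1) → α) {a b : α} (hab : a < b)
    (h0 : t 0 ≤ a) (hlast : b ≤ t (Fin.last k))
    (h : ∀ j : Fin k, ¬ Icc a b ⊆ Icc (t j.castSucc) (t j.succ)) :
    ∃ i, t i ∈ Ioo a b := by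
  obtain ⟨x, hax, hxb⟩ := exists_between hab
  obtain ⟨j, hjx, hxj⟩ := Fin.exists_castSucc_lt_le_succ t (h0.trans_lt hax) (hxb.le.trans hlast)
  by_contra! hout
  have hleft : t j.castSucc ≤ a := not_lt.1 fun ha => hout _ ⟨ha, hjx.trans hxb⟩
  have hright : b ≤ t j.succ := not_lt.1 fun hb => hout _ ⟨hax.trans_le hxj, hb⟩
  exact h j (Icc_subset_Icc hleft hright)

theorem CurveCrossing.mono {d k : ℕ} {I J : Set ℝ} {γ : ℝ → Fin d → ℝ}
    (h : CurveCrossing k J γ) (hIJ : I ⊆ J) : CurveCrossing k I γ :=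
  fun H hH => (h H hH).trans' (encard_le_encard fun _ ht => ⟨hIJ ht.1, ht.2⟩)

theorem curveCrossing_graph_iff {k : ℕ} (hk : 1 ≤ k) {I : Set ℝ} {f : ℝ → ℝ} :
    CurveCrossing k I (fun t => ![t, f t]) ↔
      ∀ m q : ℝ, {t | t ∈ I ∧ f t = m * t + q}.encard ≤ k := by
  simp only [CurveCrossing, IsHyperplane]
  constructor
  · intro h m q
    refine (h _ ⟨![m, -1], -q, fun h0 => by simpa using congrFun h0 1, rfl⟩).trans'
      (encard_le_encard fun t ht => ⟨ht.1, ?_⟩)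
    simp [ht.2]
  · rintro h _ ⟨u, c, hu, rfl⟩
    simp only [mem_ofPred_eq, Fin.sum_univ_two, Matrix.cons_val_zero, Matrix.cons_val_one]
    by_cases hu1 : u 1 = 0
    · have hu0 : u 0 ≠ 0 := fun hu0 => hu (funext fun i => by fin_cases i <;> assumption)
      calc {t | t ∈ I ∧ u 0 * t + u 1 * f t = c}.encard ≤ ({c / u 0} : Set ℝ).encard :=
            encard_le_encard fun t ht => by
              rw [mem_singleton_iff, eq_div_iff hu0]; linear_combination ht.2 - f t * hu1
        _ ≤ k := by rw [encard_singleton]; exact_mod_cast hk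
    · refine (h (-u 0 / u 1) (c / u 1)).trans' (encard_le_encard fun t ht => ⟨ht.1, ?_⟩)
      field_simp
      linear_combination ht.2

theorem exists_quintic_critical_point {B C x y : ℝ} (hxy : x < y)
    (hx : x ^ 5 - 2 * x ^ 3 + B * x = C) (hy : y ^ 5 - 2 * y ^ 3 + B * y = C) :
    ∃ z ∈ Ioo x y, 5 * z ^ 4 - 6 * z ^ 2 + B = 0 := by
  have hderiv : ∀ z ∈ Ioo x y, HasDerivAt (fun t : ℝ => t ^ 5 - 2 * t ^ 3 + B * t)
      (5 * z ^ 4 - 6 * z ^ 2 + B) z := fun z _ => by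
    have h : HasDerivAt (fun t : ℝ => t ^ 5 - 2 * t ^ 3 + B * t)
        ((5 : ℕ) * z ^ (5 - 1) - 2 * ((3 : ℕ) * z ^ (3 - 1)) + B * 1) z :=
      ((hasDerivAt_pow 5 z).sub ((hasDerivAt_pow 3 z).const_mul 2)).add
        ((hasDerivAt_id z).const_mul B)
    convert h using 1
    norm_num
    ring
  exact exists_hasDerivAt_eq_zero hxy (by fun_prop) (hx.trans hy.symm) hderiv

theorem eq_or_eq_of_quadratic_eq_zero {R : Type*} [CommRing R] [IsDomain R] {a b c s₁ s₂ s₃ : R}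
    (ha : a ≠ 0) (h12 : s₁ ≠ s₂) (h₁ : a * s₁ ^ 2 + b * s₁ + c = 0)
    (h₂ : a * s₂ ^ 2 + b * s₂ + c = 0) (h₃ : a * s₃ ^ 2 + b * s₃ + c = 0) :
    s₃ = s₁ ∨ s₃ = s₂ := by
  have hsum : a * (s₁ + s₂) + b = 0 := by
    have : (s₁ - s₂) * (a * (s₁ + s₂) + b) = 0 := by linear_combination h₁ - h₂
    exact (mul_eq_zero.1 this).resolve_left (sub_ne_zero.2 h12)
  have : a * ((s₃ - s₁) * (s₃ - s₂)) = 0 := by linear_combination h₃ - h₁ - (s₃ - s₁) * hsum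
  simpa [sub_eq_zero] using (mul_eq_zero.1 this).resolve_left ha

theorem one_lt_of_quintic_critical_points {B z₁ z₂ z₃ : ℝ} (h12 : z₁ < z₂) (h23 : z₂ < z₃)
    (h1 : -1 < z₁) (h3 : z₃ < 1) (e₁ : 5 * z₁ ^ 4 - 6 * z₁ ^ 2 + B = 0)
    (e₂ : 5 * z₂ ^ 4 - 6 * z₂ ^ 2 + B = 0) (e₃ : 5 * z₃ ^ 4 - 6 * z₃ ^ 2 + B = 0) : 1 < B := by
  obtain ⟨x, y, hxy, hx, hy, ex, ey⟩ : ∃ x y : ℝ, x ^ 2 ≠ y ^ 2 ∧ x ^ 2 < 1 ∧ y ^ 2 < 1 ∧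
      5 * x ^ 4 - 6 * x ^ 2 + B = 0 ∧ 5 * y ^ 4 - 6 * y ^ 2 + B = 0 := by
    by_cases h : z₁ ^ 2 = z₂ ^ 2
    · refine ⟨z₂, z₃, fun h' => ?_, by nlinarith, by nlinarith, e₂, e₃⟩
      have := (sq_eq_sq_iff_eq_or_eq_neg.1 h).resolve_left h12.ne
      have := (sq_eq_sq_iff_eq_or_eq_neg.1 h').resolve_left h23.ne
      linarith
    · exact ⟨z₁, z₂, h, by nlinarith, by nlinarith, e₁, e₂⟩
  -- `x², y²` are the roots of `5 s² - 6 s + B`, so `x² = 6/5 - y² > 1/5` and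
  -- `B - 1 = (5 x² - 1) (1 - x²)`.
  have hsum : x ^ 2 + y ^ 2 = 6 / 5 := by
    have : (x ^ 2 - y ^ 2) * (5 * (x ^ 2 + y ^ 2) - 6) = 0 := by linear_combination ex - ey
    linarith [(mul_eq_zero.1 this).resolve_left (sub_ne_zero.2 hxy)]
  nlinarith [mul_pos (show 0 < 5 * x ^ 2 - 1 by linarith) (show 0 < 1 - x ^ 2 by linarith)]

theorem mul_pos_of_quintic_eq {B C s s' : ℝ} (hB : 1 < B) (hne : s ≠ s')
    (hs : s ^ 5 - 2 * s ^ 3 + B * s = C) (hs' : s' ^ 5 - 2 * s' ^ 3 + B * s' = C) :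
    0 < s * s' := by
  have hfactor : ∀ x : ℝ, x ^ 5 - 2 * x ^ 3 + B * x = x * ((x ^ 2 - 1) ^ 2 + (B - 1)) :=
    fun x => by ring
  have hpos : ∀ x : ℝ, 0 < (x ^ 2 - 1) ^ 2 + (B - 1) := fun x => by positivity
  rw [hfactor] at hs hs'
  have hC : C ≠ 0 := fun hC => hne <| by
    rw [(mul_eq_zero.1 (hs.trans hC)).resolve_right (hpos s).ne',
      (mul_eq_zero.1 (hs'.trans hC)).resolve_right (hpos s').ne']
  have : 0 < s * s' * ((s ^ 2 - 1) ^ 2 + (B - 1)) * ((s' ^ 2 - 1) ^ 2 + (B - 1)) :=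
    calc 0 < C ^ 2 := by positivity
      _ = _ := by rw [sq]; nth_rw 1 [← hs]; rw [← hs']; ring
  exact pos_of_mul_pos_left (pos_of_mul_pos_left this (hpos s').le) (hpos s).le

theorem encard_quintic_eq_le_three (B C : ℝ) :
    {t | t ∈ Icc (-1 : ℝ) 1 ∧ t ^ 5 - 2 * t ^ 3 + B * t = C}.encard ≤ 3 := by
  by_contra! h
  obtain ⟨t, ht, hmem⟩ := exists_strictMono_of_le_encard (n := 4) (Order.add_one_le_of_lt h)
  obtain ⟨z₁, hz₁, e₁⟩ := exists_quintic_critical_point (ht (by decide : (0 : Fin 4) < 1))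
    (hmem 0).2 (hmem 1).2
  obtain ⟨z₂, hz₂, e₂⟩ := exists_quintic_critical_point (ht (by decide : (1 : Fin 4) < 2))
    (hmem 1).2 (hmem 2).2
  obtain ⟨z₃, hz₃, e₃⟩ := exists_quintic_critical_point (ht (by decide : (2 : Fin 4) < 3))
    (hmem 2).2 (hmem 3).2
  have hB : 1 < B := one_lt_of_quintic_critical_points (hz₁.2.trans hz₂.1) (hz₂.2.trans hz₃.1)
    ((hmem 0).1.1.trans_lt hz₁.1) (hz₃.2.trans_le (hmem 3).1.2) e₁ e₂ e₃
  have hsame : 0 < t 0 * t 3 :=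
    mul_pos_of_quintic_eq hB (ht (by decide : (0 : Fin 4) < 3)).ne (hmem 0).2 (hmem 3).2
  have hsq_ne : ∀ {u v : ℝ}, t 0 < u → u < v → v < t 3 → u ^ 2 ≠ v ^ 2 := fun hu huv hv h => by
    have := (sq_eq_sq_iff_eq_or_eq_neg.1 h).resolve_left huv.ne
    nlinarith
  have hroot : ∀ z : ℝ, 5 * z ^ 4 - 6 * z ^ 2 + B = 0 → 5 * (z ^ 2) ^ 2 + (-6) * z ^ 2 + B = 0 :=
    fun z hz => by linear_combination hz
  have h₁ : t 0 < z₁ := hz₁.1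
  have h₁₂ : z₁ < z₂ := hz₁.2.trans hz₂.1
  have h₂₃ : z₂ < z₃ := hz₂.2.trans hz₃.1
  have h₃ : z₃ < t 3 := hz₃.2
  rcases eq_or_eq_of_quadratic_eq_zero (by norm_num) (hsq_ne h₁ h₁₂ (h₂₃.trans h₃))
    (hroot _ e₁) (hroot _ e₂) (hroot _ e₃) with h | h
  · exact hsq_ne h₁ (h₁₂.trans h₂₃) h₃ h.symm
  · exact hsq_ne (h₁.trans h₁₂) h₂₃ h₃ h.symm

theorem curveCrossing_three_quintic :
    CurveCrossing 3 (Icc (-1 : ℝ) 1) (fun t => ![t, t * (1 - t ^ 2) ^ 2]) :=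
  (curveCrossing_graph_iff (by norm_num)).2 fun m q =>
    (encard_quintic_eq_le_three (1 - m) q).trans'
      (encard_le_encard fun t ht => ⟨ht.1, by linear_combination ht.2⟩)

theorem not_curveCrossing_two_graph_of_sign_change {f : ℝ → ℝ} {p x₁ x₂ r m q : ℝ}
    (hf : ContinuousOn f (Icc p r)) (hpx : p < x₁) (hx : x₁ < x₂) (hxr : x₂ < r)
    (hp : f p = m * p + q) (hr : f r = m * r + q)
    (hsign : (f x₁ - (m * x₁ + q)) * (f x₂ - (m * x₂ + q)) < 0) :
    ¬ CurveCrossing 2 (Icc p r) (fun t => ![t, f t]) := by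
  obtain ⟨y, hy, hfy⟩ : ∃ y ∈ Ioo x₁ x₂, f y - (m * y + q) = 0 := by
    have hg : ContinuousOn (fun t => f t - (m * t + q)) (Icc x₁ x₂) :=
      (hf.mono (Icc_subset_Icc hpx.le hxr.le)).sub (by fun_prop)
    rcases mul_neg_iff.1 hsign with ⟨h₁, h₂⟩ | ⟨h₁, h₂⟩
    · exact intermediate_value_Ioo' hx.le hg ⟨h₂, h₁⟩
    · exact intermediate_value_Ioo hx.le hg ⟨h₁, h₂⟩
  rw [curveCrossing_graph_iff one_le_two, not_forall]
  refine ⟨m, not_forall.2 ⟨q, not_le.2 ?_⟩⟩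
  have hpy : p < y := hpx.trans hy.1
  have hyr : y < r := hy.2.trans hxr
  calc (2 : ℕ∞) < 3 := by norm_num
    _ = ({p, y, r} : Set ℝ).encard :=
      (encard_eq_three.2 ⟨p, y, r, hpy.ne, (hpy.trans hyr).ne, hyr.ne, rfl⟩).symm
    _ ≤ _ := by
      refine encard_le_encard (insert_subset ⟨left_mem_Icc.2 (hpy.trans hyr).le, hp⟩
        (insert_subset ⟨⟨hpy.le, hyr.le⟩, by linarith⟩ (singleton_subset_iff.2
          ⟨right_mem_Icc.2 (hpy.trans hyr).le, hr⟩)))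

theorem not_curveCrossing_two_quintic_left :
    ¬ CurveCrossing 2 (Icc (-9 / 10 : ℝ) (-3 / 5)) (fun t => ![t, t * (1 - t ^ 2) ^ 2]) :=
  not_curveCrossing_two_graph_of_sign_change (x₁ := -17 / 20) (x₂ := -7 / 10)
    (m := -7109 / 10000) (q := -6723 / 10000) (by fun_prop) (by norm_num) (by norm_num)
    (by norm_num) (by norm_num) (by norm_num) (by norm_num)

theorem not_curveCrossing_two_quintic_middle :
    ¬ CurveCrossing 2 (Icc (-1 / 10 : ℝ) (1 / 10)) (fun t => ![t, t * (1 - t ^ 2) ^ 2]) :=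
  not_curveCrossing_two_graph_of_sign_change (x₁ := -1 / 20) (x₂ := 1 / 20)
    (m := 9801 / 10000) (q := 0) (by fun_prop) (by norm_num) (by norm_num)
    (by norm_num) (by norm_num) (by norm_num) (by norm_num)

theorem not_curveCrossing_two_quintic_right :
    ¬ CurveCrossing 2 (Icc (3 / 5 : ℝ) (9 / 10)) (fun t => ![t, t * (1 - t ^ 2) ^ 2]) :=
  not_curveCrossing_two_graph_of_sign_change (x₁ := 7 / 10) (x₂ := 17 / 20)
    (m := -7109 / 10000) (q := 6723 / 10000) (by fun_prop) (by norm_num) (by norm_num)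
    (by norm_num) (by norm_num) (by norm_num) (by norm_num)

/-- The curve `γ t = (t, t (1 - t²)²)` on `[-1, 1]` is `3`-crossing, but
`[-1, 1]` cannot be subdivided into fewer than `4` closed subintervals on each of which
`γ` is convex (`2`-crossing); hence `M(2) ≥ 4`. -/
theorem three_crossing_curve_needs_four_pieces :
    CurveCrossing 3 (Set.Icc (-1 : ℝ) 1)
        (fun t => ![t, t * (1 - t ^ 2) ^ 2]) ∧
      ¬ ∃ k : ℕ, k < 4 ∧ ∃ t : Fin (k + 1) → ℝ,
          t 0 = -1 ∧ t (Fin.last k) = 1 ∧ Monotone t ∧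
          ∀ j : Fin k, CurveCrossing 2 (Set.Icc (t j.castSucc) (t j.succ))
            (fun t => ![t, t * (1 - t ^ 2) ^ 2]) := by
  refine ⟨curveCrossing_three_quintic, ?_⟩
  rintro ⟨k, hk, t, h0, hlast, hmono, hconv⟩
  have hcut : ∀ a b : ℝ, a < b → -1 ≤ a → b ≤ 1 →
      ¬ CurveCrossing 2 (Icc a b) (fun t => ![t, t * (1 - t ^ 2) ^ 2]) → ∃ i, t i ∈ Ioo a b :=
    fun a b hab ha hb hbad => Fin.exists_mem_Ioo_of_forall_not_Icc_subset t hab (h0 ▸ ha)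
      (hlast ▸ hb) fun j hj => hbad ((hconv j).mono hj)
  obtain ⟨i₁, hi₁⟩ := hcut _ _ (by norm_num) (by norm_num) (by norm_num)
    not_curveCrossing_two_quintic_left
  obtain ⟨i₂, hi₂⟩ := hcut _ _ (by norm_num) (by norm_num) (by norm_num)
    not_curveCrossing_two_quintic_middle
  obtain ⟨i₃, hi₃⟩ := hcut _ _ (by norm_num) (by norm_num) (by norm_num)
    not_curveCrossing_two_quintic_right
  have h01 : 0 < i₁ := hmono.reflect_lt (by linarith [hi₁.1])
  have h12 : i₁ < i₂ := hmono.reflect_lt (by linarith [hi₁.2, hi₂.1])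
  have h23 : i₂ < i₃ := hmono.reflect_lt (by linarith [hi₂.2, hi₃.1])
  have h3k : i₃ < Fin.last k := hmono.reflect_lt (by linarith [hi₃.2])
  simp only [Fin.lt_def, Fin.val_zero, Fin.val_last] at h01 h12 h23 h3k
  omega
end

section
/- Let d ≥ 2 and let P = (p_1,…,p_n) be a sequence of points in super-general position in R^d such that the polygonal path p_1⋯p_n is d-crossing. Let q_i ∈ R^{d−1} be the projection of p_i to the first d−1 coordinates. Then the polygonal path q_1⋯q_n in R^{d−1} is d-crossing. -/
open Set

/-- Let `d ≥ 2` and let `p` be a sequence of points in super-general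
position in `ℝ^d` whose polygonal path is `d`-crossing. Then the polygonal path of the
projections of the points to the first `d-1` coordinates is `d`-crossing in `ℝ^(d-1)`. -/
theorem projection_of_d_crossing_path :
    ∀ (d n : ℕ), 2 ≤ d → ∀ p : Fin n → (Fin d → ℝ),
      SuperGeneralPosition p → PathCrossing d p →
      PathCrossing d (fun i => fun j : Fin (d - 1) => p i (Fin.castLE (Nat.sub_le d 1) j)) := by
  intro d n _ p _ hcross h' hh' hedge
  obtain ⟨u', c, hu', rfl⟩ := hh'
  set π : (Fin d → ℝ) → (Fin (d - 1) → ℝ) :=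
    fun x j => x (Fin.castLE (Nat.sub_le d 1) j) with hπ
  set u : Fin d → ℝ := fun i => if h : (i : ℕ) < d - 1 then u' ⟨i, h⟩ else 0 with hu
  have key : ∀ x : Fin d → ℝ,
      ∑ i, u i * x i = ∑ j, u' j * x (Fin.castLE (Nat.sub_le d 1) j) := by
    intro x
    rw [← Finset.sum_subset (Finset.subset_univ
      ((Finset.univ : Finset (Fin (d - 1))).map (Fin.castLEEmb (Nat.sub_le d 1))))]
    · rw [Finset.sum_map]
      refine Finset.sum_congr rfl fun j _ => ?_
      simp [u, Fin.castLEEmb, Fin.castLE, j.isLt]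
    · intro i _ hi
      have hlt : ¬ (i : ℕ) < d - 1 := by
        intro hlt
        refine hi (Finset.mem_map.mpr ⟨⟨i, hlt⟩, Finset.mem_univ _, ?_⟩)
        simp [Fin.castLEEmb, Fin.castLE]
      simp [u, hlt]
  have hune : u ≠ 0 := by
    obtain ⟨j, hj⟩ := Function.ne_iff.mp hu'
    intro h0
    apply hj
    have := congrFun h0 (Fin.castLE (Nat.sub_le d 1) j)
    simpa [u, Fin.castLE, j.isLt] using this
  have hmem : ∀ x : Fin d → ℝ,
      x ∈ {x : Fin d → ℝ | ∑ i, u i * x i = c} ↔ π x ∈ {y : Fin (d-1) → ℝ | ∑ j, u' j * y j = c} := by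
    intro x
    simp only [mem_setOf_eq, key x, hπ]
  have hpre : {x : Fin d → ℝ | ∑ i, u i * x i = c} =
      π ⁻¹' {y : Fin (d-1) → ℝ | ∑ j, u' j * y j = c} := by
    ext x; exact hmem x
  have hseg : ∀ a b : Fin d → ℝ, π '' segment ℝ a b = segment ℝ (π a) (π b) := by
    intro a b
    exact image_segment ℝ ((LinearMap.funLeft ℝ ℝ (Fin.castLE (Nat.sub_le d 1))).toAffineMap) a b
  have hpath : PathSet (fun i => fun j : Fin (d - 1) => p i (Fin.castLE (Nat.sub_le d 1) j))
      = π '' PathSet p := by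
    unfold PathSet
    rw [image_iUnion]
    refine iUnion_congr fun i => ?_
    rw [image_iUnion]
    exact iUnion_congr fun hi => (hseg _ _).symm
  have hne : ∀ (i : Fin n) (hi : (i : ℕ) + 1 < n),
      ¬ segment ℝ (p i) (p ⟨(i : ℕ) + 1, hi⟩) ⊆ {x : Fin d → ℝ | ∑ i, u i * x i = c} := by
    intro i hi hsub
    apply hedge i hi
    intro y hy
    rw [← hseg] at hy
    obtain ⟨x, hx, rfl⟩ := hy
    exact (hmem x).mp (hsub hx)
  have hmain := hcross {x : Fin d → ℝ | ∑ i, u i * x i = c} ⟨u, c, hune, rfl⟩ hne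
  calc (PathSet (fun i => fun j : Fin (d - 1) => p i (Fin.castLE (Nat.sub_le d 1) j)) ∩
        {y : Fin (d-1) → ℝ | ∑ j, u' j * y j = c}).encard
      = (π '' (PathSet p ∩ {x : Fin d → ℝ | ∑ i, u i * x i = c})).encard := by
        rw [hpath, hpre, image_inter_preimage]
    _ ≤ (PathSet p ∩ {x : Fin d → ℝ | ∑ i, u i * x i = c}).encard := Set.encard_image_le _ _
    _ ≤ (d : ℕ∞) := hmain
end
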